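/- arXiv:1305.4877 — 5 statements merged into one kernel-verified Lean document; each statement's English description precedes it below -/
import Mathlib

section
/- For every n ≥ 1 and every k with 1 ≤ k ≤ n, the number of link patterns of n strands whose exposure number equals k is binom(2n−k, n)·k/(2n−k); equivalently, (2n−k) times this number equals k·binom(2n−k, n). -/
/-- A link pattern of `n` strands: a fixed-point-free involution of `{0, …, 2n-1}`
that is noncrossing. -/
def IsLinkPattern (n : ℕ) (μ : Fin (2*n) → Fin (2*n)) : Prop :=
  (∀ i, μ (μ i) = i) ∧ (∀ i, μ i ≠ i) ∧
  (∀ a b c d : Fin (2*n), a < b → b < c → c < d → μ a = c → μ b = d → False)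

/-- The exposure number of `μ`: the number of outermost links `(a, b)` (pairs with
`a < b`, `μ a = b`, such that there is no link `(c, d)` with `c < a` and `b < d`). -/
noncomputable def exposure (n : ℕ) (μ : Fin (2*n) → Fin (2*n)) : ℕ :=
  Nat.card {p : Fin (2*n) × Fin (2*n) //
    p.1 < p.2 ∧ μ p.1 = p.2 ∧ ∀ c d : Fin (2*n), c < p.1 → p.2 < d → μ c ≠ d}

/-
Let `A(N, k)` be the number of link patterns on `N` points with `k` outermost links. If the last
point `N + 1` of a pattern on `N + 2` points is linked to `N`, deleting that link leaves a pattern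
on `N` points with one outermost link fewer. Otherwise `N + 1` is linked to some `a` and `N` to
some `e` with `a < e < N`; relabelling the positions so that these two links become `(a, e)` and
`(e + 1, N + 1)`, while the links inside `(e, N)` move one step to the right, splits the last
outermost link into two, and every pattern with at least two outermost links arises in this way
exactly once. Hence `A(N + 2, k + 1) = A(N, k) + A(N + 2, k + 2)`. Together with `A(2n, n) = 1`
and `A(2n, 0) = 0` for `n > 0` this recursion determines `A(2n, k)`, and Pascal's rule together
with `C(m, r + 1) (r + 1) = C(m, r) (m - r)` shows that the ballot numbers
`k / (2n - k) · C(2n - k, n)` satisfy it.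
-/

open Finset Function

/-- A link pattern on the points `0, …, N-1`, extended by the identity to all of `ℕ` so that
positions can be manipulated with ordinary arithmetic. -/
structure IsLinkPatternOn (N : ℕ) (f : ℕ → ℕ) : Prop where
  apply_of_le : ∀ i, N ≤ i → f i = i
  apply_lt : ∀ i, i < N → f i < N
  involutive : Involutive f
  apply_ne : ∀ i, i < N → f i ≠ i
  noncrossing : ∀ a b, a < b → b < f a → f a < f b → False

/-- The left ends `t` of the outermost links are the points `t < N` such that `f` maps
`{0, …, t-1}` to itself. -/
def outermostOpeners (N : ℕ) (f : ℕ → ℕ) : Finset ℕ :=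
  (range N).filter fun t => ∀ c < t, f c < t

theorem mem_outermostOpeners {N t : ℕ} {f : ℕ → ℕ} :
    t ∈ outermostOpeners N f ↔ t < N ∧ ∀ c < t, f c < t := by
  simp [outermostOpeners]

namespace IsLinkPatternOn

variable {N : ℕ} {f : ℕ → ℕ}

theorem apply_apply (hf : IsLinkPatternOn N f) (i : ℕ) : f (f i) = i := hf.involutive i

theorem nested (hf : IsLinkPatternOn N f) {a b : ℕ} (hab : a < b) (hb : b < f a) :
    a < f b ∧ f b < f a := by
  have hfa := hf.apply_apply a
  have hfb := hf.apply_apply b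
  have h1 : f b ≠ a := fun h => by rw [← h, hfb] at hb; omega
  have h2 : f b ≠ f a := fun h => by have := hf.involutive.injective h; omega
  constructor
  · by_contra h
    exact hf.noncrossing (f b) a (by omega) (by omega) (by omega)
  · by_contra h
    exact hf.noncrossing a b hab hb (by omega)

theorem apply_lt_apply_of_forall_lt (hf : IsLinkPatternOn N f) {t : ℕ}
    (ht : ∀ c < t + 1, f c < t + 1) {c : ℕ} (hc : c < f t) : f c < f t := by
  have htt := ht t (by omega)
  have hct := ht c (by omega)
  have h1 := hf.apply_apply c
  have h2 := hf.apply_apply t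
  have h3 : f c ≠ t := fun h => by rw [← h, h1] at hc; omega
  have h4 : f c ≠ f t := fun h => by have := hf.involutive.injective h; omega
  have := hf.nested (a := f t) (b := f c)
  omega

theorem apply_last_mem_outermostOpeners {M : ℕ} (hf : IsLinkPatternOn (M + 1) f) :
    f M ∈ outermostOpeners (M + 1) f :=
  mem_outermostOpeners.2
    ⟨hf.apply_lt M (by omega), fun _ => hf.apply_lt_apply_of_forall_lt hf.apply_lt⟩

theorem lt_apply_of_mem_outermostOpeners (hf : IsLinkPatternOn N f) {t : ℕ}
    (ht : t ∈ outermostOpeners N f) : t < f t := by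
  rw [mem_outermostOpeners] at ht
  have := hf.apply_ne t ht.1
  have := ht.2 (f t)
  have := hf.apply_apply t
  omega

theorem mem_outermostOpeners_iff (hf : IsLinkPatternOn N f) {t : ℕ} :
    t ∈ outermostOpeners N f ↔ t < f t ∧ ∀ c < t, ¬f t < f c := by
  refine ⟨fun ht => ⟨hf.lt_apply_of_mem_outermostOpeners ht, fun c hc => ?_⟩,
    fun ⟨ht, hout⟩ => ?_⟩
  · have := (mem_outermostOpeners.1 ht).2 c hc
    have := hf.lt_apply_of_mem_outermostOpeners ht
    omega
  · have htN : t < N := by by_contra h; rw [hf.apply_of_le t (by omega)] at ht; omega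
    refine mem_outermostOpeners.2 ⟨htN, fun c hc => ?_⟩
    have := hout c hc
    have := hf.apply_apply c
    have := hf.apply_apply t
    have h1 : f c ≠ t := fun h => by rw [← h] at ht; omega
    have h2 : f c ≠ f t := fun h => by have := hf.involutive.injective h; omega
    have := hf.nested (a := t) (b := f c)
    omega

theorem two_mul_card_outermostOpeners_le (hf : IsLinkPatternOn N f) :
    2 * #(outermostOpeners N f) ≤ N := by
  set S := outermostOpeners N f
  have hdisj : Disjoint S (S.image f) := by
    refine disjoint_left.2 fun t ht ht' => ?_
    obtain ⟨s, hs, rfl⟩ := mem_image.1 ht'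
    have := hf.lt_apply_of_mem_outermostOpeners hs
    have := hf.lt_apply_of_mem_outermostOpeners ht
    have := hf.apply_apply s
    omega
  have hsub : S ∪ S.image f ⊆ range N := by
    refine union_subset (filter_subset _ _) fun t ht => ?_
    obtain ⟨s, hs, rfl⟩ := mem_image.1 ht
    exact mem_range.2 (hf.apply_lt s (mem_outermostOpeners.1 hs).1)
  have := card_le_card hsub
  rw [card_union_of_disjoint hdisj, card_image_of_injective _ hf.involutive.injective,
    card_range] at this
  omega

end IsLinkPatternOn

def extendById {N : ℕ} (μ : Fin N → Fin N) (i : ℕ) : ℕ :=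
  if h : i < N then μ ⟨i, h⟩ else i

@[simp]
theorem extendById_val {N : ℕ} (μ : Fin N → Fin N) (i : Fin N) : extendById μ i = μ i := by
  simp [extendById]

theorem extendById_of_le {N : ℕ} (μ : Fin N → Fin N) {i : ℕ} (hi : N ≤ i) :
    extendById μ i = i := by
  simp [extendById, not_lt.2 hi]

theorem isLinkPattern_iff_isLinkPatternOn {n : ℕ} {μ : Fin (2 * n) → Fin (2 * n)} :
    IsLinkPattern n μ ↔ IsLinkPatternOn (2 * n) (extendById μ) := by
  constructor
  · rintro ⟨hinv, hne, hnc⟩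
    refine ⟨fun i => extendById_of_le μ, fun i hi => ?_, fun i => ?_, fun i hi h => ?_, ?_⟩
    · lift i to Fin (2 * n) using hi
      simp
    · by_cases hi : i < 2 * n
      · lift i to Fin (2 * n) using hi
        simp [hinv]
      · simp [extendById_of_le μ (not_lt.1 hi)]
    · lift i to Fin (2 * n) using hi
      exact hne i (Fin.ext (by simpa using h))
    · intro a b hab hb hc
      have ha : a < 2 * n := by
        by_contra h; rw [extendById_of_le μ (not_lt.1 h)] at hb; omega
      have hb' : b < 2 * n := by have := (μ ⟨a, ha⟩).isLt; simp [extendById, ha] at hb; omega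
      lift a to Fin (2 * n) using ha
      lift b to Fin (2 * n) using hb'
      simp only [extendById_val] at hb hc
      exact hnc a b (μ a) (μ b) hab hb hc rfl rfl
  · intro hf
    refine ⟨fun i => Fin.ext (by simpa using hf.apply_apply i), fun i h => ?_, ?_⟩
    · exact hf.apply_ne i i.isLt (by simp [h])
    · rintro a b c d hab hbc hcd rfl rfl
      exact hf.noncrossing a b hab (by simpa using hbc) (by simpa using hcd)

def IsLinkPatternOn.toFin {N : ℕ} {f : ℕ → ℕ} (hf : IsLinkPatternOn N f) (i : Fin N) :
    Fin N :=
  ⟨f i, hf.apply_lt i i.isLt⟩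

theorem IsLinkPatternOn.extendById_toFin {N : ℕ} {f : ℕ → ℕ} (hf : IsLinkPatternOn N f) :
    extendById hf.toFin = f := by
  funext i
  by_cases hi : i < N
  · lift i to Fin N using hi
    simp [toFin]
  · rw [extendById_of_le _ (not_lt.1 hi), hf.apply_of_le i (not_lt.1 hi)]

theorem mem_outermostOpeners_extendById_iff {n : ℕ} {μ : Fin (2 * n) → Fin (2 * n)}
    (hμ : IsLinkPattern n μ) (a : Fin (2 * n)) :
    (a : ℕ) ∈ outermostOpeners (2 * n) (extendById μ) ↔
      a < μ a ∧ ∀ c d, c < a → μ a < d → μ c ≠ d := by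
  rw [(isLinkPattern_iff_isLinkPatternOn.1 hμ).mem_outermostOpeners_iff, extendById_val]
  refine and_congr Iff.rfl ⟨fun h c d hc hd hcd => h c hc (by simpa [hcd] using hd),
    fun h c hc hlt => ?_⟩
  lift c to Fin (2 * n) using (by omega)
  exact h c (μ c) hc (by simpa using hlt) rfl

theorem exposure_eq_card_outermostOpeners {n : ℕ} {μ : Fin (2 * n) → Fin (2 * n)}
    (hμ : IsLinkPattern n μ) : exposure n μ = #(outermostOpeners (2 * n) (extendById μ)) := by
  rw [exposure, ← Nat.card_eq_finsetCard]
  exact Nat.card_congr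
    { toFun := fun p => ⟨p.1.1, (mem_outermostOpeners_extendById_iff hμ _).2
        (by rw [p.2.2.1]; exact ⟨p.2.1, p.2.2.2⟩)⟩
      invFun := fun t =>
        have ht : (t : ℕ) < 2 * n := (mem_outermostOpeners.1 t.2).1
        ⟨(⟨t, ht⟩, μ ⟨t, ht⟩), by
          have := (mem_outermostOpeners_extendById_iff hμ ⟨t, ht⟩).1 t.2
          exact ⟨this.1, rfl, this.2⟩⟩
      left_inv := fun p => Subtype.ext (Prod.ext rfl p.2.2.1)
      right_inv := fun t => rfl }

theorem IsLinkPatternOn.isLinkPattern_toFin {n : ℕ} {f : ℕ → ℕ}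
    (hf : IsLinkPatternOn (2 * n) f) : IsLinkPattern n hf.toFin := by
  rw [isLinkPattern_iff_isLinkPatternOn, hf.extendById_toFin]
  exact hf

theorem finite_linkPatterns (N : ℕ) (P : (ℕ → ℕ) → Prop) :
    Finite {f : ℕ → ℕ // IsLinkPatternOn N f ∧ P f} :=
  Finite.of_injective (fun f => f.2.1.toFin) fun f g h => Subtype.ext <| by
    rw [← f.2.1.extendById_toFin, ← g.2.1.extendById_toFin]
    exact congrArg extendById h

noncomputable def linkPatternCount (N k : ℕ) : ℕ :=
  Nat.card {f : ℕ → ℕ // IsLinkPatternOn N f ∧ #(outermostOpeners N f) = k}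

theorem linkPatternCount_zero_zero : linkPatternCount 0 0 = 1 := by
  have hid : IsLinkPatternOn 0 id :=
    ⟨fun _ _ => rfl, fun _ h => absurd h (Nat.not_lt_zero _), fun _ => rfl,
      fun _ h => absurd h (Nat.not_lt_zero _), fun _ _ h₁ h₂ _ => by simp at h₂; omega⟩
  rw [linkPatternCount, Nat.card_eq_one_iff_exists]
  exact ⟨⟨id, hid, by simp [outermostOpeners]⟩,
    fun f => Subtype.ext (funext fun i => f.2.1.apply_of_le i (Nat.zero_le i))⟩

theorem linkPatternCount_zero_right {N : ℕ} (hN : 0 < N) : linkPatternCount N 0 = 0 := by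
  rw [linkPatternCount, Nat.card_eq_zero]
  refine Or.inl ⟨fun f => ?_⟩
  have : 0 ∈ outermostOpeners N f.1 :=
    mem_outermostOpeners.2 ⟨hN, fun c hc => absurd hc c.not_lt_zero⟩
  exact (card_pos.2 ⟨0, this⟩).ne' f.2.2

theorem linkPatternCount_eq_zero_of_lt {N k : ℕ} (h : N < 2 * k) : linkPatternCount N k = 0 := by
  rw [linkPatternCount, Nat.card_eq_zero]
  refine Or.inl ⟨fun f => ?_⟩
  have := f.2.1.two_mul_card_outermostOpeners_le
  rw [f.2.2] at this
  omega

theorem card_linkPattern_eq_linkPatternCount (n k : ℕ) :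
    Nat.card {μ : Fin (2 * n) → Fin (2 * n) // IsLinkPattern n μ ∧ exposure n μ = k} =
      linkPatternCount (2 * n) k :=
  Nat.card_congr
    { toFun := fun μ => ⟨extendById μ.1, isLinkPattern_iff_isLinkPatternOn.1 μ.2.1,
        by rw [← exposure_eq_card_outermostOpeners μ.2.1, μ.2.2]⟩
      invFun := fun f => ⟨f.2.1.toFin, f.2.1.isLinkPattern_toFin, by
        rw [exposure_eq_card_outermostOpeners f.2.1.isLinkPattern_toFin,
          f.2.1.extendById_toFin, f.2.2]⟩
      left_inv := fun μ => Subtype.ext (funext fun i => Fin.ext (by simp [IsLinkPatternOn.toFin]))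
      right_inv := fun f => Subtype.ext f.2.1.extendById_toFin }

def addLastArc (N : ℕ) (g : ℕ → ℕ) (i : ℕ) : ℕ :=
  if i = N then N + 1 else if i = N + 1 then N else g i

def truncate (N : ℕ) (f : ℕ → ℕ) (i : ℕ) : ℕ :=
  if i < N then f i else i

section LastArc

variable {N : ℕ} {f g : ℕ → ℕ}

theorem isLinkPatternOn_addLastArc (hg : IsLinkPatternOn N g) :
    IsLinkPatternOn (N + 2) (addLastArc N g) where
  apply_of_le i hi := by
    have := hg.apply_of_le i
    simp only [addLastArc]; split_ifs <;> omega
  apply_lt i hi := by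
    have := hg.apply_lt i
    simp only [addLastArc]; split_ifs <;> omega
  involutive i := by
    have := hg.apply_lt i
    have := hg.apply_of_le i
    have := hg.apply_apply i
    simp only [addLastArc]; split_ifs <;> omega
  apply_ne i hi := by
    have := hg.apply_ne i
    have := hg.apply_of_le i
    simp only [addLastArc]; split_ifs <;> omega
  noncrossing a b := by
    have := hg.noncrossing a b
    have := hg.apply_lt a
    have := hg.apply_of_le a
    simp only [addLastArc]; split_ifs <;> omega

theorem isLinkPatternOn_truncate (hf : IsLinkPatternOn (N + 2) f) (hl : f (N + 1) = N) :
    IsLinkPatternOn N (truncate N f) := by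
  have hfN : f N = N + 1 := by simpa [hl] using hf.apply_apply (N + 1)
  have hlt : ∀ i < N, f i < N := fun i hi => by
    have := hf.apply_lt i (by omega)
    have := hf.apply_apply i
    have h1 : f i ≠ N := fun h => by rw [h, hfN] at this; omega
    have h2 : f i ≠ N + 1 := fun h => by rw [h, hl] at this; omega
    omega
  refine ⟨fun i hi => if_neg (by omega), fun i hi => ?_, fun i => ?_, fun i hi => ?_,
    fun a b => ?_⟩
  · simpa only [truncate, if_pos hi] using hlt i hi
  · have := hlt i
    have := hf.apply_apply i
    simp only [truncate]; split_ifs <;> omega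
  · simpa only [truncate, if_pos hi] using hf.apply_ne i (by omega)
  · have := hf.noncrossing a b
    have := hlt a
    simp only [truncate]; split_ifs <;> omega

theorem addLastArc_truncate (hf : IsLinkPatternOn (N + 2) f) (hl : f (N + 1) = N) :
    addLastArc N (truncate N f) = f := by
  funext i
  have := hf.apply_of_le i
  have : f N = N + 1 := by simpa [hl] using hf.apply_apply (N + 1)
  simp only [addLastArc, truncate]; split_ifs <;> subst_vars <;> omega

theorem truncate_addLastArc (hg : IsLinkPatternOn N g) : truncate N (addLastArc N g) = g := by
  funext i
  have := hg.apply_of_le i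
  simp only [addLastArc, truncate]; split_ifs <;> omega

theorem outermostOpeners_addLastArc (hg : IsLinkPatternOn N g) :
    outermostOpeners (N + 2) (addLastArc N g) = insert N (outermostOpeners N g) := by
  ext t
  simp only [mem_insert, mem_outermostOpeners]
  have hclosed : ∀ c < N, addLastArc N g c = g c := fun c hc => by
    simp only [addLastArc]; split_ifs <;> omega
  rcases lt_trichotomy t N with h | rfl | h
  · refine ⟨fun ⟨_, ht⟩ => Or.inr ⟨h, fun c hc => ?_⟩, ?_⟩
    · simpa [hclosed c (by omega)] using ht c hc
    · rintro (rfl | ⟨_, ht⟩)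
      · omega
      · exact ⟨by omega, fun c hc => by simpa [hclosed c (by omega)] using ht c hc⟩
  · exact iff_of_true ⟨by omega, fun c hc => by rw [hclosed c hc]; exact hg.apply_lt c hc⟩
      (Or.inl rfl)
  · refine iff_of_false (fun ⟨htN, ht⟩ => ?_) (by omega)
    have := ht N h
    simp only [addLastArc, if_pos] at this
    omega

theorem card_outermostOpeners_addLastArc (hg : IsLinkPatternOn N g) :
    #(outermostOpeners (N + 2) (addLastArc N g)) = #(outermostOpeners N g) + 1 := by
  rw [outermostOpeners_addLastArc hg, card_insert_of_notMem]
  exact fun h => (lt_irrefl N) (mem_outermostOpeners.1 h).1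

end LastArc

def relabel (N e i : ℕ) : ℕ :=
  if i = e then N + 1 else if i = N + 1 then e else if i = N then e + 1
  else if e < i ∧ i < N then i + 1 else i

def unrelabel (N e i : ℕ) : ℕ :=
  if i = N + 1 then e else if i = e then N + 1 else if i = e + 1 then N
  else if e + 1 < i ∧ i ≤ N then i - 1 else i

section Relabel

variable {N e : ℕ}

theorem unrelabel_relabel (h : e < N) : LeftInverse (unrelabel N e) (relabel N e) := by
  intro i; unfold relabel unrelabel; split_ifs <;> omega

theorem relabel_unrelabel (h : e < N) : LeftInverse (relabel N e) (unrelabel N e) := by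
  intro i; unfold relabel unrelabel; split_ifs <;> omega

theorem relabel_of_le (h : e < N) (i : ℕ) (hi : N + 2 ≤ i) : relabel N e i = i := by
  unfold relabel; split_ifs <;> omega

theorem unrelabel_of_le (h : e < N) (i : ℕ) (hi : N + 2 ≤ i) : unrelabel N e i = i := by
  unfold unrelabel; split_ifs <;> omega

end Relabel

theorem lt_of_leftInverse {N : ℕ} {σ τ : ℕ → ℕ} (h : LeftInverse τ σ)
    (hτ : ∀ i, N ≤ i → τ i = i) {i : ℕ} (hi : i < N) : σ i < N := by
  by_contra h'
  have := hτ _ (not_lt.1 h')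
  rw [h i] at this
  omega

theorem IsLinkPatternOn.conj {N : ℕ} {f σ τ : ℕ → ℕ} (hf : IsLinkPatternOn N f)
    (hστ : LeftInverse σ τ) (hτσ : LeftInverse τ σ)
    (hσ : ∀ i, N ≤ i → σ i = i) (hτ : ∀ i, N ≤ i → τ i = i)
    (hnc : ∀ a b, a < b → b < (σ ∘ f ∘ τ) a → (σ ∘ f ∘ τ) a < (σ ∘ f ∘ τ) b →
      False) :
    IsLinkPatternOn N (σ ∘ f ∘ τ) where
  apply_of_le i hi := by simp [hτ i hi, hf.apply_of_le i hi, hσ i hi]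
  apply_lt i hi := lt_of_leftInverse hτσ hτ (hf.apply_lt _ (lt_of_leftInverse hστ hσ hi))
  involutive i := by simp only [comp_apply, hτσ _, hf.apply_apply, hστ _]
  apply_ne i hi h := hf.apply_ne (τ i) (lt_of_leftInverse hστ hσ hi)
    (by simpa only [comp_apply, hτσ _] using congrArg τ h)
  noncrossing := hnc

def splitLast (N : ℕ) (f : ℕ → ℕ) : ℕ → ℕ :=
  relabel N (f N) ∘ f ∘ unrelabel N (f N)

def mergeLast (N : ℕ) (g : ℕ → ℕ) : ℕ → ℕ :=
  unrelabel N (g (N + 1) - 1) ∘ g ∘ relabel N (g (N + 1) - 1)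

section Split

variable {N : ℕ} {f : ℕ → ℕ}

namespace IsLinkPatternOn

theorem apply_last_lt_apply (hf : IsLinkPatternOn (N + 2) f) (hN : f (N + 1) ≠ N) :
    f (N + 1) < f N ∧ f N < N := by
  have := hf.apply_lt (N + 1) (by omega)
  have := hf.apply_ne (N + 1) (by omega)
  have := hf.apply_ne N (by omega)
  have := hf.apply_apply (N + 1)
  have := hf.nested (a := f (N + 1)) (b := N)
  omega

theorem apply_lt_apply_last (hf : IsLinkPatternOn (N + 2) f) {x : ℕ} (hx : x < f (N + 1)) :
    f x < f (N + 1) :=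
  (mem_outermostOpeners.1 hf.apply_last_mem_outermostOpeners).2 x hx

theorem nested_between (hf : IsLinkPatternOn (N + 2) f) (hN : f (N + 1) ≠ N) {x : ℕ}
    (h1 : f (N + 1) < x) (h2 : x < f N) : f (N + 1) < f x ∧ f x < f N := by
  obtain ⟨hae, heN⟩ := hf.apply_last_lt_apply hN
  have := hf.nested (a := f (N + 1)) (b := x)
  have := hf.nested (a := f N) (b := f x)
  have := hf.apply_apply (N + 1)
  have := hf.apply_apply N
  have hx := hf.apply_apply x
  have : f x ≠ N := fun h => by rw [h] at hx; omega
  have : f x ≠ f N := fun h => by have := hf.involutive.injective h; omega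
  omega

end IsLinkPatternOn

theorem splitLast_apply_of_lt (hf : IsLinkPatternOn (N + 2) f) (hN : f (N + 1) ≠ N) {x : ℕ}
    (hx : x < f N) (hxa : x ≠ f (N + 1)) : splitLast N f x = f x := by
  obtain ⟨hae, heN⟩ := hf.apply_last_lt_apply hN
  have hfx : f x < f N := by
    rcases lt_or_gt_of_ne hxa with h | h
    · have := hf.apply_lt_apply_last h; omega
    · exact (hf.nested_between hN h hx).2
  simp only [splitLast, comp_apply, relabel, unrelabel]; split_ifs <;> omega

theorem splitLast_apply_apply_last (hf : IsLinkPatternOn (N + 2) f) (hN : f (N + 1) ≠ N) :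
    splitLast N f (f (N + 1)) = f N := by
  obtain ⟨hae, heN⟩ := hf.apply_last_lt_apply hN
  have := hf.apply_apply (N + 1)
  simp only [splitLast, comp_apply, relabel, unrelabel]; split_ifs <;> omega

theorem splitLast_apply_apply (hf : IsLinkPatternOn (N + 2) f) (hN : f (N + 1) ≠ N) :
    splitLast N f (f N) = f (N + 1) := by
  obtain ⟨hae, heN⟩ := hf.apply_last_lt_apply hN
  simp only [splitLast, comp_apply, relabel, unrelabel]; split_ifs <;> omega

theorem splitLast_apply_succ_apply (hf : IsLinkPatternOn (N + 2) f) (hN : f (N + 1) ≠ N) :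
    splitLast N f (f N + 1) = N + 1 := by
  obtain ⟨hae, heN⟩ := hf.apply_last_lt_apply hN
  simp only [splitLast, comp_apply, relabel, unrelabel]; split_ifs <;> omega

theorem splitLast_apply_last (hf : IsLinkPatternOn (N + 2) f) (hN : f (N + 1) ≠ N) :
    splitLast N f (N + 1) = f N + 1 := by
  obtain ⟨hae, heN⟩ := hf.apply_last_lt_apply hN
  have := hf.apply_apply N
  simp only [splitLast, comp_apply, relabel, unrelabel]; split_ifs <;> omega

theorem splitLast_apply_succ (hf : IsLinkPatternOn (N + 2) f) (hN : f (N + 1) ≠ N) {x : ℕ}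
    (h1 : f N < x) (h2 : x < N) : splitLast N f (x + 1) = f x + 1 := by
  obtain ⟨hae, heN⟩ := hf.apply_last_lt_apply hN
  have := hf.apply_apply N
  have := hf.nested (a := f N) (b := x)
  simp only [splitLast, comp_apply, relabel, unrelabel, Nat.add_sub_cancel]
  split_ifs <;> omega

theorem splitLast_apply_of_le (hf : IsLinkPatternOn (N + 2) f) (hN : f (N + 1) ≠ N) {x : ℕ}
    (hx : N + 2 ≤ x) : splitLast N f x = x := by
  have heN := (hf.apply_last_lt_apply hN).2
  simp only [splitLast, comp_apply, unrelabel_of_le heN x hx, hf.apply_of_le x hx,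
    relabel_of_le heN x hx]

theorem splitLast_noncrossing (hf : IsLinkPatternOn (N + 2) f) (hN : f (N + 1) ≠ N)
    (u b : ℕ) (hub : u < b) (hb : b < splitLast N f u)
    (hc : splitLast N f u < splitLast N f b) : False := by
  obtain ⟨hae, heN⟩ := hf.apply_last_lt_apply hN
  have hfe := hf.apply_apply N
  rcases (by omega : (u < f N ∧ u ≠ f (N + 1)) ∨ u = f (N + 1) ∨ u = f N ∨ u = f N + 1 ∨
      (f N + 1 < u ∧ u ≤ N) ∨ u = N + 1 ∨ N + 2 ≤ u)
    with hu | rfl | rfl | rfl | hu | rfl | hu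
  · rw [splitLast_apply_of_lt hf hN hu.1 hu.2] at hb hc
    have hbe : b < f N ∧ b ≠ f (N + 1) := by
      rcases lt_or_gt_of_ne hu.2 with h | h
      · have := hf.apply_lt_apply_last h; omega
      · have := hf.nested_between hN h hu.1; omega
    rw [splitLast_apply_of_lt hf hN hbe.1 hbe.2] at hc
    have := hf.nested hub hb
    omega
  · rw [splitLast_apply_apply_last hf hN] at hb hc
    rw [splitLast_apply_of_lt hf hN hb (by omega)] at hc
    have := hf.nested_between hN hub hb
    omega
  · rw [splitLast_apply_apply hf hN] at hb
    omega
  · rw [splitLast_apply_succ_apply hf hN] at hb hc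
    obtain ⟨y, rfl⟩ : ∃ y, b = y + 1 := ⟨b - 1, by omega⟩
    rw [splitLast_apply_succ hf hN (by omega) (by omega)] at hc
    have := hf.nested (a := f N) (b := y)
    omega
  · obtain ⟨x, rfl⟩ : ∃ x, u = x + 1 := ⟨u - 1, by omega⟩
    have := hf.nested (a := f N) (b := x)
    rw [splitLast_apply_succ hf hN (by omega) (by omega)] at hb hc
    obtain ⟨y, rfl⟩ : ∃ y, b = y + 1 := ⟨b - 1, by omega⟩
    rw [splitLast_apply_succ hf hN (by omega) (by omega)] at hc
    have := hf.nested (a := x) (b := y)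
    omega
  · rw [splitLast_apply_last hf hN] at hb
    omega
  · rw [splitLast_apply_of_le hf hN hu] at hb
    omega

theorem isLinkPatternOn_splitLast (hf : IsLinkPatternOn (N + 2) f) (hN : f (N + 1) ≠ N) :
    IsLinkPatternOn (N + 2) (splitLast N f) :=
  have heN := (hf.apply_last_lt_apply hN).2
  hf.conj (relabel_unrelabel heN) (unrelabel_relabel heN) (relabel_of_le heN)
    (unrelabel_of_le heN) (splitLast_noncrossing hf hN)

theorem outermostOpeners_splitLast (hf : IsLinkPatternOn (N + 2) f) (hN : f (N + 1) ≠ N) :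
    outermostOpeners (N + 2) (splitLast N f) = insert (f N + 1) (outermostOpeners (N + 2) f) := by
  obtain ⟨hae, heN⟩ := hf.apply_last_lt_apply hN
  have hfa := hf.apply_apply (N + 1)
  ext t
  simp only [mem_insert, mem_outermostOpeners]
  rcases (by omega : t ≤ f (N + 1) ∨ (f (N + 1) < t ∧ t ≤ f N) ∨ t = f N + 1 ∨
      f N + 1 < t)
    with ht | ht | rfl | ht
  · have : (∀ c < t, splitLast N f c < t) ↔ ∀ c < t, f c < t :=
      forall₂_congr fun c hc => by rw [splitLast_apply_of_lt hf hN (by omega) (by omega)]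
    rw [this, or_iff_right (by omega)]
  · refine iff_of_false (fun h => ?_) (fun h => ?_)
    · have := h.2 _ ht.1
      rw [splitLast_apply_apply_last hf hN] at this
      omega
    · have := h.resolve_left (by omega)
      have := this.2 _ ht.1
      omega
  · refine iff_of_true ⟨by omega, fun c hc => ?_⟩ (Or.inl rfl)
    rcases (by omega : (c < f N ∧ c ≠ f (N + 1)) ∨ c = f (N + 1) ∨ c = f N)
      with hc | rfl | rfl
    · rw [splitLast_apply_of_lt hf hN hc.1 hc.2]
      rcases lt_or_gt_of_ne hc.2 with h | h
      · have := hf.apply_lt_apply_last h; omega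
      · have := hf.nested_between hN h hc.1; omega
    · rw [splitLast_apply_apply_last hf hN]; omega
    · rw [splitLast_apply_apply hf hN]; omega
  · refine iff_of_false (fun h => ?_) (fun h => ?_)
    · have := h.2 _ ht
      rw [splitLast_apply_succ_apply hf hN] at this
      omega
    · have := h.resolve_left (by omega)
      have := this.2 (f (N + 1)) (by omega)
      omega

theorem card_outermostOpeners_splitLast (hf : IsLinkPatternOn (N + 2) f) (hN : f (N + 1) ≠ N) :
    #(outermostOpeners (N + 2) (splitLast N f)) = #(outermostOpeners (N + 2) f) + 1 := by
  obtain ⟨hae, heN⟩ := hf.apply_last_lt_apply hN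
  rw [outermostOpeners_splitLast hf hN, card_insert_of_notMem]
  intro h
  have := (mem_outermostOpeners.1 h).2 (f (N + 1)) (by omega)
  have := hf.apply_apply (N + 1)
  omega

end Split

section Merge

variable {N e : ℕ} {g : ℕ → ℕ}

theorem mergeLast_eq (he : g (N + 1) = e + 1) :
    mergeLast N g = unrelabel N e ∘ g ∘ relabel N e := by
  rw [mergeLast, he, Nat.add_sub_cancel]

theorem IsLinkPatternOn.lt_of_apply_last_eq (hg : IsLinkPatternOn (N + 2) g)
    (he : g (N + 1) = e + 1) : e < N := by
  have := hg.apply_lt (N + 1) (by omega)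
  have := hg.apply_ne (N + 1) (by omega)
  omega

theorem IsLinkPatternOn.apply_lt_apply_of_apply_last_eq (hg : IsLinkPatternOn (N + 2) g)
    (he : g (N + 1) = e + 1) {x : ℕ} (hx : x < g e) : g x < g e :=
  hg.apply_lt_apply_of_forall_lt
    (fun c hc => by rw [← he] at hc ⊢; exact hg.apply_lt_apply_last hc) hx

theorem mergeLast_apply_of_lt (hg : IsLinkPatternOn (N + 2) g) (he : g (N + 1) = e + 1)
    (hae : g e < e) {x : ℕ} (hx : x < e) (hxa : x ≠ g e) : mergeLast N g x = g x := by
  have heN := hg.lt_of_apply_last_eq he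
  have hgx : g x < e := by
    rcases lt_or_gt_of_ne hxa with h | h
    · have := hg.apply_lt_apply_of_apply_last_eq he h; omega
    · have := hg.apply_apply e
      have := hg.nested (a := g e) (b := x)
      omega
  simp only [mergeLast_eq he, comp_apply, relabel, unrelabel]; split_ifs <;> omega

theorem mergeLast_apply_apply (hg : IsLinkPatternOn (N + 2) g) (he : g (N + 1) = e + 1)
    (hae : g e < e) : mergeLast N g (g e) = N + 1 := by
  have heN := hg.lt_of_apply_last_eq he
  have := hg.apply_apply e
  simp only [mergeLast_eq he, comp_apply, relabel, unrelabel]; split_ifs <;> omega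

theorem mergeLast_apply_self (hg : IsLinkPatternOn (N + 2) g) (he : g (N + 1) = e + 1) :
    mergeLast N g e = N := by
  have heN := hg.lt_of_apply_last_eq he
  simp only [mergeLast_eq he, comp_apply, relabel, unrelabel]; split_ifs <;> omega

theorem mergeLast_apply_penultimate (hg : IsLinkPatternOn (N + 2) g) (he : g (N + 1) = e + 1) :
    mergeLast N g N = e := by
  have heN := hg.lt_of_apply_last_eq he
  have := hg.apply_apply (N + 1)
  rw [he] at this
  simp only [mergeLast_eq he, comp_apply, relabel, unrelabel]; split_ifs <;> omega

theorem mergeLast_apply_last (hg : IsLinkPatternOn (N + 2) g) (he : g (N + 1) = e + 1)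
    (hae : g e < e) : mergeLast N g (N + 1) = g e := by
  have heN := hg.lt_of_apply_last_eq he
  simp only [mergeLast_eq he, comp_apply, relabel, unrelabel]; split_ifs <;> omega

theorem mergeLast_apply_of_lt_of_lt (hg : IsLinkPatternOn (N + 2) g) (he : g (N + 1) = e + 1)
    {x : ℕ} (h1 : e < x) (h2 : x < N) : mergeLast N g x = g (x + 1) - 1 := by
  have heN := hg.lt_of_apply_last_eq he
  have := hg.apply_apply (N + 1)
  rw [he] at this
  have := hg.nested (a := e + 1) (b := x + 1)
  simp only [mergeLast_eq he, comp_apply, relabel, unrelabel]; split_ifs <;> omega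

theorem mergeLast_lt (hg : IsLinkPatternOn (N + 2) g) (he : g (N + 1) = e + 1) {x : ℕ}
    (hx : x < N + 2) : mergeLast N g x < N + 2 := by
  have heN := hg.lt_of_apply_last_eq he
  rw [mergeLast_eq he]
  exact lt_of_leftInverse (relabel_unrelabel heN) (relabel_of_le heN)
    (hg.apply_lt _ (lt_of_leftInverse (unrelabel_relabel heN) (unrelabel_of_le heN) hx))

theorem mergeLast_noncrossing (hg : IsLinkPatternOn (N + 2) g) (he : g (N + 1) = e + 1)
    (hae : g e < e) (u b : ℕ) (hub : u < b) (hb : b < mergeLast N g u)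
    (hc : mergeLast N g u < mergeLast N g b) : False := by
  have heN := hg.lt_of_apply_last_eq he
  have hgl := hg.apply_apply (N + 1)
  rw [he] at hgl
  rcases (by omega : (u < e ∧ u ≠ g e) ∨ u = g e ∨ u = e ∨ (e < u ∧ u < N) ∨ u = N ∨
      u = N + 1 ∨ N + 2 ≤ u) with hu | rfl | hu | hu | rfl | rfl | hu
  · rw [mergeLast_apply_of_lt hg he hae hu.1 hu.2] at hb hc
    have hbe : b < e ∧ b ≠ g e := by
      rcases lt_or_gt_of_ne hu.2 with h | h
      · have := hg.apply_lt_apply_of_apply_last_eq he h; omega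
      · have := hg.apply_apply e
        have := hg.nested (a := g e) (b := u)
        omega
    rw [mergeLast_apply_of_lt hg he hae hbe.1 hbe.2] at hc
    have := hg.nested hub hb
    omega
  · rw [mergeLast_apply_apply hg he hae] at hb hc
    have := mergeLast_lt hg he (x := b) (by omega)
    omega
  · rw [hu, mergeLast_apply_self hg he] at hb hc
    rw [hu] at hub
    rw [mergeLast_apply_of_lt_of_lt hg he hub hb] at hc
    have := hg.nested (a := e + 1) (b := b + 1)
    omega
  · rw [mergeLast_apply_of_lt_of_lt hg he hu.1 hu.2] at hb hc
    have := hg.nested (a := e + 1) (b := u + 1)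
    rw [mergeLast_apply_of_lt_of_lt hg he (by omega) (by omega)] at hc
    have := hg.nested (a := u + 1) (b := b + 1)
    omega
  · rw [mergeLast_apply_penultimate hg he] at hb
    omega
  · rw [mergeLast_apply_last hg he hae] at hb
    omega
  · rw [mergeLast_eq he, comp_apply, comp_apply, relabel_of_le heN u hu, hg.apply_of_le u hu,
      unrelabel_of_le heN u hu] at hb
    omega

theorem isLinkPatternOn_mergeLast (hg : IsLinkPatternOn (N + 2) g) (he : g (N + 1) = e + 1)
    (hae : g e < e) : IsLinkPatternOn (N + 2) (mergeLast N g) := by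
  have heN := hg.lt_of_apply_last_eq he
  have hnc := mergeLast_noncrossing hg he hae
  rw [mergeLast_eq he] at hnc ⊢
  exact hg.conj (unrelabel_relabel heN) (relabel_unrelabel heN) (unrelabel_of_le heN)
    (relabel_of_le heN) hnc

end Merge

theorem mergeLast_splitLast {N : ℕ} {f : ℕ → ℕ} (hf : IsLinkPatternOn (N + 2) f)
    (hN : f (N + 1) ≠ N) : mergeLast N (splitLast N f) = f := by
  have heN := (hf.apply_last_lt_apply hN).2
  rw [mergeLast_eq (splitLast_apply_last hf hN)]
  funext x
  simp only [splitLast, comp_apply, unrelabel_relabel heN _]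

theorem splitLast_mergeLast {N e : ℕ} {g : ℕ → ℕ} (hg : IsLinkPatternOn (N + 2) g)
    (he : g (N + 1) = e + 1) : splitLast N (mergeLast N g) = g := by
  have heN := hg.lt_of_apply_last_eq he
  rw [splitLast, mergeLast_apply_penultimate hg he, mergeLast_eq he]
  funext x
  simp only [comp_apply, relabel_unrelabel heN _]

theorem IsLinkPatternOn.exists_apply_last_eq_add_one {N : ℕ} {g : ℕ → ℕ}
    (hg : IsLinkPatternOn (N + 2) g) (h : 1 < #(outermostOpeners (N + 2) g)) :
    ∃ e, g (N + 1) = e + 1 ∧ g e < e := by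
  have hp := mem_outermostOpeners.1 hg.apply_last_mem_outermostOpeners
  obtain ⟨t, ht, htp⟩ := exists_mem_ne h (g (N + 1))
  have htg := hg.lt_apply_of_mem_outermostOpeners ht
  have ht' := mem_outermostOpeners.1 ht
  have := hg.apply_apply (N + 1)
  have htp' : t < g (N + 1) := by
    by_contra h'
    have := ht'.2 (g (N + 1)) (by omega)
    omega
  have := hp.2 t htp'
  refine ⟨g (N + 1) - 1, by omega, ?_⟩
  have := hp.2 (g (N + 1) - 1) (by omega)
  have := hg.apply_ne (g (N + 1) - 1) (by omega)
  omega

theorem card_outermostOpeners_mergeLast {N e : ℕ} {g : ℕ → ℕ}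
    (hg : IsLinkPatternOn (N + 2) g) (he : g (N + 1) = e + 1) (hae : g e < e) :
    #(outermostOpeners (N + 2) (mergeLast N g)) + 1 = #(outermostOpeners (N + 2) g) := by
  have hN : mergeLast N g (N + 1) ≠ N := by
    have := hg.lt_of_apply_last_eq he
    rw [mergeLast_apply_last hg he hae]
    omega
  rw [← card_outermostOpeners_splitLast (isLinkPatternOn_mergeLast hg he hae) hN,
    splitLast_mergeLast hg he]

def lastArcEquiv (N k : ℕ) :
    {f : {f : ℕ → ℕ // IsLinkPatternOn (N + 2) f ∧ #(outermostOpeners (N + 2) f) = k + 1} //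
      f.1 (N + 1) = N} ≃
    {g : ℕ → ℕ // IsLinkPatternOn N g ∧ #(outermostOpeners N g) = k} where
  toFun f := ⟨truncate N f.1.1, isLinkPatternOn_truncate f.1.2.1 f.2, by
    have := card_outermostOpeners_addLastArc (isLinkPatternOn_truncate f.1.2.1 f.2)
    rw [addLastArc_truncate f.1.2.1 f.2, f.1.2.2] at this
    omega⟩
  invFun g := ⟨⟨addLastArc N g.1, isLinkPatternOn_addLastArc g.2.1,
    by rw [card_outermostOpeners_addLastArc g.2.1, g.2.2]⟩, by simp [addLastArc]⟩
  left_inv f := Subtype.ext (Subtype.ext (addLastArc_truncate f.1.2.1 f.2))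
  right_inv g := Subtype.ext (truncate_addLastArc g.2.1)

noncomputable def splitLastEquiv (N k : ℕ) :
    {f : {f : ℕ → ℕ // IsLinkPatternOn (N + 2) f ∧ #(outermostOpeners (N + 2) f) = k + 1} //
      ¬f.1 (N + 1) = N} ≃
    {g : ℕ → ℕ // IsLinkPatternOn (N + 2) g ∧ #(outermostOpeners (N + 2) g) = k + 2} where
  toFun f := ⟨splitLast N f.1.1, isLinkPatternOn_splitLast f.1.2.1 f.2,
    by rw [card_outermostOpeners_splitLast f.1.2.1 f.2, f.1.2.2]⟩
  invFun g :=
    have hsplit := g.2.1.exists_apply_last_eq_add_one (by rw [g.2.2]; omega)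
    ⟨⟨mergeLast N g.1, by
        obtain ⟨e, he, hae⟩ := hsplit
        have := card_outermostOpeners_mergeLast g.2.1 he hae
        exact ⟨isLinkPatternOn_mergeLast g.2.1 he hae, by rw [g.2.2] at this; omega⟩⟩, by
      obtain ⟨e, he, hae⟩ := hsplit
      have := g.2.1.lt_of_apply_last_eq he
      show mergeLast N g.1 (N + 1) ≠ N
      rw [mergeLast_apply_last g.2.1 he hae]
      omega⟩
  left_inv f := Subtype.ext (Subtype.ext (mergeLast_splitLast f.1.2.1 f.2))
  right_inv g := by
    obtain ⟨e, he, -⟩ := g.2.1.exists_apply_last_eq_add_one (by rw [g.2.2]; omega)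
    exact Subtype.ext (splitLast_mergeLast g.2.1 he)

theorem linkPatternCount_add_two (N k : ℕ) :
    linkPatternCount (N + 2) (k + 1) = linkPatternCount N k + linkPatternCount (N + 2) (k + 2) := by
  classical
  have := finite_linkPatterns (N + 2) fun f => #(outermostOpeners (N + 2) f) = k + 1
  rw [linkPatternCount, ← Nat.card_congr (Equiv.sumCompl fun f => f.1 (N + 1) = N), Nat.card_sum,
    Nat.card_congr (lastArcEquiv N k), Nat.card_congr (splitLastEquiv N k)]
  rfl

theorem linkPatternCount_two_mul_self (n : ℕ) : linkPatternCount (2 * n) n = 1 := by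
  induction n with
  | zero => exact linkPatternCount_zero_zero
  | succ n ih =>
    have := linkPatternCount_add_two (2 * n) n
    rwa [linkPatternCount_eq_zero_of_lt (N := 2 * n + 2) (k := n + 2) (by omega), ih,
      ← Nat.mul_succ] at this

theorem ballot_step {k d A₀ A₁ A₂ : ℕ} (hrec : A₁ = A₀ + A₂)
    (h₀ : (k + 2 * (d + 1)) * A₀ = k * (k + 2 * (d + 1)).choose (k + (d + 1)))
    (h₂ : (k + 2 + 2 * d) * A₂ = (k + 2) * (k + 2 + 2 * d).choose (k + 2 + d)) :
    (k + 1 + 2 * (d + 1)) * A₁ = (k + 1) * (k + 1 + 2 * (d + 1)).choose (k + 1 + (d + 1)) := by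
  rw [show k + 2 + 2 * d = k + 2 * (d + 1) by omega, show k + 2 + d = k + (d + 1) + 1 by omega]
    at h₂
  rw [show k + 1 + 2 * (d + 1) = k + 2 * (d + 1) + 1 by omega,
    show k + 1 + (d + 1) = k + (d + 1) + 1 by omega, Nat.choose_succ_succ', hrec]
  have hratio := Nat.choose_succ_right_eq (k + 2 * (d + 1)) (k + (d + 1))
  rw [show k + 2 * (d + 1) - (k + (d + 1)) = d + 1 by omega] at hratio
  apply Nat.eq_of_mul_eq_mul_left (show 0 < k + 2 * (d + 1) by omega)
  zify at h₀ h₂ hratio ⊢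
  linear_combination ((k : ℤ) + 2 * (d + 1) + 1) * h₀ + ((k : ℤ) + 2 * (d + 1) + 1) * h₂ +
    2 * hratio

theorem linkPatternCount_ballot (k d : ℕ) :
    (k + 2 * d) * linkPatternCount (2 * (k + d)) k = k * (k + 2 * d).choose (k + d) := by
  induction d generalizing k with
  | zero => simp [linkPatternCount_two_mul_self]
  | succ d ihd =>
    induction k with
    | zero => rw [linkPatternCount_zero_right (by omega), mul_zero, zero_mul]
    | succ k ihk =>
      have h₂ := ihd (k + 2)
      rw [show 2 * (k + 2 + d) = 2 * (k + (d + 1)) + 2 by omega] at h₂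
      rw [show 2 * (k + 1 + (d + 1)) = 2 * (k + (d + 1)) + 2 by omega]
      exact ballot_step (linkPatternCount_add_two _ k) ihk h₂

theorem card_linkPattern_exposure_general (n k : ℕ) (hkn : k ≤ n) :
    (2*n - k) *
      Nat.card {μ : Fin (2*n) → Fin (2*n) // IsLinkPattern n μ ∧ exposure n μ = k}
      = k * Nat.choose (2*n - k) n := by
  obtain ⟨d, rfl⟩ := Nat.exists_eq_add_of_le hkn
  rw [card_linkPattern_eq_linkPatternCount, show 2 * (k + d) - k = k + 2 * d by omega]
  exact linkPatternCount_ballot k d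

/-- The number of link patterns of `n` strands with exposure number `k` is
`binom(2n-k, n) · k / (2n-k)`, stated in the cross-multiplied form. -/
theorem card_linkPattern_exposure (n k : ℕ) (hn : 1 ≤ n) (hk1 : 1 ≤ k) (hkn : k ≤ n) :
    (2*n - k) *
      Nat.card {μ : Fin (2*n) → Fin (2*n) // IsLinkPattern n μ ∧ exposure n μ = k}
      = k * Nat.choose (2*n - k) n :=
  card_linkPattern_exposure_general n k hkn
end

section
/- For every n ≥ 1 and every k with 1 ≤ k ≤ n, the number of Dyck paths of semilength n whose last descent length equals k is binom(2n−k, n)·k/(2n−k); equivalently, (2n−k) times this number equals k·binom(2n−k, n). -/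
/-!
Cutting off the final peak `U D^k` of a Dyck path of semilength `n` with last descent length `k`
leaves a path with `n - 1` up-steps and `n - k` down-steps that never goes below height `0`, and
every such path arises exactly once. Among the `binom(a+b, b)` paths from height `h` with `a`
up-steps and `b` down-steps, exactly `binom(a+b, a+h+1)` go below `0` (the reflection principle);
here this is proved by induction on the first step with Pascal's rule. For `h = 0`, `a = n - 1`,
`b = n - k` the difference is the ballot number `k / (2n-k) · binom(2n-k, n)`.
-/

/-- A Dyck path of semilength `n`: a sequence of `2n` steps (`true` = ascent `+1`,
`false` = descent `-1`) with all partial sums nonnegative and total sum `0`. -/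
def IsDyckPath (n : ℕ) (s : Fin (2*n) → Bool) : Prop :=
  (∀ j : Fin (2*n),
      (Finset.univ.filter (fun i => i ≤ j ∧ s i = false)).card
        ≤ (Finset.univ.filter (fun i => i ≤ j ∧ s i = true)).card) ∧
  (Finset.univ.filter (fun i => s i = true)).card = n

/-- The last descent length: the number of trailing descents of the path. -/
def lastDescent (n : ℕ) (s : Fin (2*n) → Bool) : ℕ :=
  (Finset.univ.filter (fun i : Fin (2*n) => ∀ j, i ≤ j → s j = false)).card

open Finset

namespace List

variable {α : Type*} {m : ℕ} (s : Fin m → α)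

theorem drop_ofFn_eq_cons_replicate_iff {k : ℕ} (hk : k < m) (x y : α) :
    (ofFn s).drop (m - k - 1) = x :: replicate k y ↔
      s ⟨m - k - 1, by omega⟩ = x ∧ ∀ j : Fin m, m - k ≤ j → s j = y := by
  rw [drop_eq_getElem_cons (by simp; omega), cons.injEq, List.getElem_ofFn, eq_replicate_iff]
  simp only [length_drop, length_ofFn, mem_drop_iff_getElem, List.getElem_ofFn]
  refine and_congr_right fun _ => ⟨fun ⟨_, H⟩ j hj => H (s j) ?_, fun H => ⟨by omega, ?_⟩⟩
  · exact ⟨j - (m - k), by omega, congrArg s (Fin.ext (by simp; omega))⟩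
  · rintro b ⟨i, hi, rfl⟩
    exact H _ (by simp; omega)

variable [DecidableEq α]


theorem count_take_ofFn (c : α) (t : ℕ) :
    ((ofFn s).take t).count c = #{i | i.val < t ∧ s i = c} := by
  have hcount (L : List α) : L.count c = (L.map fun x => if x = c then 1 else 0).sum := by
    induction L with
    | nil => rfl
    | cons x L ih => simp only [count_cons, beq_iff_eq, map_cons, sum_cons, ih]; omega
  rw [hcount, map_take, map_ofFn, sum_take_ofFn, Function.comp_def, Finset.sum_boole, Finset.filter_filter,
    Nat.cast_id]

theorem count_ofFn (c : α) : (ofFn s).count c = #{i | s i = c} := by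
  simpa [take_of_length_le] using count_take_ofFn s c m

theorem card_filter_le_eq_count_take (j : Fin m) (c : α) :
    #{i | i ≤ j ∧ s i = c} = ((ofFn s).take (j + 1)).count c := by
  simp only [count_take_ofFn, Nat.lt_add_one_iff, Fin.le_def]

end List

def StaysNonneg (h : ℕ) (l : List Bool) : Prop :=
  ∀ t, (l.take t).count false ≤ (l.take t).count true + h

section StaysNonneg

variable {h : ℕ}

theorem StaysNonneg.count_false_le {l : List Bool} (hl : StaysNonneg h l) :
    l.count false ≤ l.count true + h := by
  simpa using hl l.length

theorem staysNonneg_iff_forall_take_succ {l : List Bool} :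
    StaysNonneg h l ↔
      ∀ j < l.length, (l.take (j + 1)).count false ≤ (l.take (j + 1)).count true + h := by
  refine ⟨fun H j _ => H (j + 1), fun H t => ?_⟩
  rcases t with _ | t
  · simp
  by_cases ht : t < l.length
  · exact H t ht
  rw [List.take_of_length_le (by omega)]
  rcases l.eq_nil_or_concat with rfl | ⟨l', x, rfl⟩
  · simp
  simpa [List.take_of_length_le] using H l'.length (by simp)

theorem staysNonneg_append {l₁ l₂ : List Bool} :
    StaysNonneg h (l₁ ++ l₂) ↔
      StaysNonneg h l₁ ∧ StaysNonneg (h + l₁.count true - l₁.count false) l₂ := by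
  constructor
  · intro H
    have H₁ : StaysNonneg h l₁ := fun t => by
      by_cases ht : t ≤ l₁.length
      · simpa [List.take_append_of_le_length ht] using H t
      · simpa [List.take_of_length_le (le_of_not_ge ht)] using H l₁.length
    refine ⟨H₁, fun t => ?_⟩
    have := H (l₁.length + t)
    rw [List.take_length_add_append, List.count_append, List.count_append] at this
    have := H₁.count_false_le
    omega
  · rintro ⟨H₁, H₂⟩ t
    rw [List.take_append, List.count_append, List.count_append]
    by_cases ht : t ≤ l₁.length
    · simpa [Nat.sub_eq_zero_of_le ht] using H₁ t
    · rw [List.take_of_length_le (by omega)]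
      have := H₂ (t - l₁.length)
      have := H₁.count_false_le
      omega

theorem staysNonneg_replicate_true (a : ℕ) : StaysNonneg h (List.replicate a true) := by
  intro t
  simp [List.count_replicate]

theorem staysNonneg_replicate_false {b : ℕ} (hb : b ≤ h) :
    StaysNonneg h (List.replicate b false) := by
  intro t
  simp only [List.take_replicate, List.count_replicate_self, List.count_replicate, beq_true,
    Bool.false_eq_true, ↓reduceIte, zero_add, inf_le_iff]
  omega

theorem staysNonneg_cons_true {l : List Bool} :
    StaysNonneg h (true :: l) ↔ StaysNonneg (h + 1) l := by
  have : StaysNonneg h [true] := staysNonneg_replicate_true 1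
  rw [← List.singleton_append, staysNonneg_append]
  simp [this]

theorem staysNonneg_cons_false {l : List Bool} :
    StaysNonneg h (false :: l) ↔ 1 ≤ h ∧ StaysNonneg (h - 1) l := by
  have : StaysNonneg h [false] ↔ 1 ≤ h :=
    ⟨fun H => by simpa using H.count_false_le, staysNonneg_replicate_false (b := 1)⟩
  rw [← List.singleton_append, staysNonneg_append, this]
  simp

end StaysNonneg

def ballotPaths (h a b : ℕ) : Set (List Bool) :=
  {l | l.count true = a ∧ l.count false = b ∧ StaysNonneg h l}

section ballotPaths

variable {h a b : ℕ}

theorem length_of_mem_ballotPaths {l : List Bool} (hl : l ∈ ballotPaths h a b) :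
    l.length = a + b := by
  rw [← hl.1, ← hl.2.1, List.count_true_add_count_false]

theorem ballotPaths_finite : (ballotPaths h a b).Finite :=
  (List.finite_length_eq Bool (a + b)).subset fun _ => length_of_mem_ballotPaths

theorem nil_mem_ballotPaths : [] ∈ ballotPaths h a b ↔ a = 0 ∧ b = 0 := by
  simp [ballotPaths, StaysNonneg, eq_comm]

theorem cons_true_mem_ballotPaths {l : List Bool} :
    true :: l ∈ ballotPaths h a b ↔ 1 ≤ a ∧ l ∈ ballotPaths (h + 1) (a - 1) b := by
  simp only [ballotPaths, Set.mem_ofPred_eq, List.count_cons_self, ne_eq, Bool.true_eq_false,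
    not_false_eq_true, List.count_cons_of_ne, staysNonneg_cons_true]
  grind

theorem cons_false_mem_ballotPaths {l : List Bool} :
    false :: l ∈ ballotPaths h a b ↔ 1 ≤ h ∧ 1 ≤ b ∧ l ∈ ballotPaths (h - 1) a (b - 1) := by
  simp only [ballotPaths, Set.mem_ofPred_eq, ne_eq, Bool.false_eq_true, not_false_eq_true,
    List.count_cons_of_ne, List.count_cons_self, staysNonneg_cons_false]
  grind

theorem ballotPaths_succ_succ :
    ballotPaths (h + 1) (a + 1) (b + 1) =
      (true :: ·) '' ballotPaths (h + 2) a (b + 1) ∪ (false :: ·) '' ballotPaths h (a + 1) b := by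
  ext (_ | ⟨_ | _, l⟩) <;>
    simp [nil_mem_ballotPaths, cons_true_mem_ballotPaths, cons_false_mem_ballotPaths]

theorem ballotPaths_zero_succ : ballotPaths 0 (a + 1) b = (true :: ·) '' ballotPaths 1 a b := by
  ext (_ | ⟨_ | _, l⟩) <;>
    simp [nil_mem_ballotPaths, cons_true_mem_ballotPaths, cons_false_mem_ballotPaths]

theorem ballotPaths_zero_right : ballotPaths h a 0 = {List.replicate a true} := by
  ext l
  refine ⟨fun hl => ?_, ?_⟩
  · rw [Set.mem_singleton_iff, List.eq_replicate_iff]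
    refine ⟨length_of_mem_ballotPaths hl, fun x hx => ?_⟩
    cases x
    · exact absurd hl.2.1 (List.count_pos_iff.2 hx).ne'
    · rfl
  · rintro rfl
    refine ⟨?_, ?_, staysNonneg_replicate_true a⟩ <;> simp [List.count_replicate]

theorem ballotPaths_zero_left (hb : b ≤ h) : ballotPaths h 0 b = {List.replicate b false} := by
  ext l
  refine ⟨fun hl => ?_, ?_⟩
  · rw [Set.mem_singleton_iff, List.eq_replicate_iff]
    refine ⟨(length_of_mem_ballotPaths hl).trans (zero_add b), fun x hx => ?_⟩
    cases x
    · rfl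
    · exact absurd hl.1 (List.count_pos_iff.2 hx).ne'
  · rintro rfl
    refine ⟨?_, ?_, staysNonneg_replicate_false hb⟩ <;> simp [List.count_replicate]

theorem ncard_ballotPaths_succ_succ :
    (ballotPaths (h + 1) (a + 1) (b + 1)).ncard =
      (ballotPaths (h + 2) a (b + 1)).ncard + (ballotPaths h (a + 1) b).ncard := by
  have hdisj : Disjoint ((true :: ·) '' ballotPaths (h + 2) a (b + 1))
      ((false :: ·) '' ballotPaths h (a + 1) b) := by
    simp [Set.disjoint_left]
  rw [ballotPaths_succ_succ, Set.ncard_union_eq hdisj (ballotPaths_finite.image _)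
    (ballotPaths_finite.image _), Set.ncard_image_of_injective _ List.cons_injective,
    Set.ncard_image_of_injective _ List.cons_injective]

theorem ncard_ballotPaths_zero_succ :
    (ballotPaths 0 (a + 1) b).ncard = (ballotPaths 1 a b).ncard := by
  rw [ballotPaths_zero_succ, Set.ncard_image_of_injective _ List.cons_injective]

theorem ncard_ballotPaths_add_choose (hb : b ≤ a + h) :
    (ballotPaths h a b).ncard + (a + b).choose (a + h + 1) = (a + b).choose b := by
  induction a generalizing b h with
  | zero =>
    rw [ballotPaths_zero_left (by omega), Set.ncard_singleton, zero_add, zero_add,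
      Nat.choose_eq_zero_of_lt (by omega), Nat.choose_self]
  | succ a iha =>
    induction b generalizing h with
    | zero =>
      rw [ballotPaths_zero_right, Set.ncard_singleton, Nat.choose_eq_zero_of_lt (by omega),
        Nat.choose_zero_right]
    | succ b ihb =>
      have pascal (i : ℕ) : (a + 1 + (b + 1)).choose (i + 1) =
          (a + b + 1).choose i + (a + b + 1).choose (i + 1) := by
        rw [show a + 1 + (b + 1) = a + b + 1 + 1 by ring, Nat.choose_succ_succ']
      rw [pascal b]
      cases h with
      | zero =>
        have ih := iha (h := 1) (b := b + 1) (by omega)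
        have hsymm : (a + b + 1).choose (a + 1) = (a + b + 1).choose b := by
          rw [show a + b + 1 = a + 1 + b by ring, Nat.choose_symm_add]
        rw [ncard_ballotPaths_zero_succ, pascal (a + 1)]
        rw [show a + (b + 1) = a + b + 1 by ring] at ih
        omega
      | succ h =>
        have ih₁ := iha (h := h + 2) (b := b + 1) (by omega)
        have ih₂ := ihb (h := h) (by omega)
        rw [ncard_ballotPaths_succ_succ, show a + 1 + (h + 1) + 1 = a + h + 2 + 1 by ring, pascal]
        rw [show a + (b + 1) = a + b + 1 by ring,
          show a + (h + 2) + 1 = a + h + 2 + 1 by ring] at ih₁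
        rw [show a + 1 + b = a + b + 1 by ring, show a + 1 + h + 1 = a + h + 2 by ring] at ih₂
        omega

theorem add_one_mul_ncard_ballotPaths_zero (hba : b ≤ a) :
    (a + b + 1) * (ballotPaths 0 a b).ncard = (a + 1 - b) * (a + b + 1).choose (a + 1) := by
  have key := ncard_ballotPaths_add_choose (h := 0) (a := a) (b := b) (by omega)
  have e₁ : (a + b + 1) * (a + b).choose b = (a + b + 1).choose (a + 1) * (a + 1) := by
    rw [← Nat.choose_symm_add, Nat.add_one_mul_choose_eq]
  have e₂ : (a + b + 1) * (a + b).choose (a + 1) = (a + b + 1).choose (a + 1) * b := by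
    rw [mul_comm, Nat.choose_mul_succ_eq, show a + b + 1 - (a + 1) = b by omega]
  obtain ⟨d, rfl⟩ := Nat.exists_eq_add_of_le hba
  rw [show b + d + 1 - b = d + 1 by omega]
  rw [add_zero] at key
  nlinarith

end ballotPaths

theorem isDyckPath_iff_ofFn_mem_ballotPaths {n : ℕ} {s : Fin (2 * n) → Bool} :
    IsDyckPath n s ↔ List.ofFn s ∈ ballotPaths 0 n n := by
  have hlen := List.count_true_add_count_false (List.ofFn s)
  simp only [IsDyckPath, ballotPaths, Set.mem_ofPred_eq, staysNonneg_iff_forall_take_succ,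
    List.card_filter_le_eq_count_take, ← List.count_ofFn, List.length_ofFn, add_zero,
    Fin.forall_iff] at hlen ⊢
  constructor
  · rintro ⟨H, htrue⟩
    exact ⟨htrue, by omega, H⟩
  · rintro ⟨htrue, -, H⟩
    exact ⟨H, htrue⟩

section lastDescent

variable {n : ℕ} (s : Fin (2 * n) → Bool)

theorem lastDescent_le_of_eq_true {j : Fin (2 * n)} (hj : s j = true) :
    lastDescent n s ≤ 2 * n - 1 - j := by
  rw [lastDescent, ← Fin.card_Ioi]
  refine card_le_card fun i hi => ?_
  simp only [mem_filter, mem_univ, true_and] at hi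
  by_contra hij
  simpa [hj] using hi j (not_lt.1 (by simpa using hij))

theorem le_lastDescent_of_forall {a : Fin (2 * n)} (ha : ∀ j, a ≤ j → s j = false) :
    2 * n - a ≤ lastDescent n s := by
  rw [lastDescent, ← Fin.card_Ici]
  refine card_le_card fun i hi => ?_
  simp only [mem_filter, mem_univ, true_and]
  exact fun j hij => ha j ((mem_Ici.1 hi).trans hij)

theorem lastDescent_eq_iff {k : ℕ} (hk1 : 1 ≤ k) (hk : k < 2 * n) :
    lastDescent n s = k ↔
      (List.ofFn s).drop (2 * n - k - 1) = true :: List.replicate k false := by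
  rw [List.drop_ofFn_eq_cons_replicate_iff s hk]
  constructor
  · intro hcard
    have htail : ∀ j : Fin (2 * n), 2 * n - k ≤ j → s j = false := fun j hj => by
      by_contra hj'
      have := lastDescent_le_of_eq_true s (j := j) (by simpa using hj')
      omega
    refine ⟨?_, htail⟩
    by_contra hpeak
    have := le_lastDescent_of_forall s (a := ⟨2 * n - k - 1, by omega⟩) fun j hj => by
      rcases (Fin.le_def.1 hj).eq_or_lt with h | h
      · rw [show j = ⟨2 * n - k - 1, by omega⟩ from Fin.ext h.symm]
        simpa using hpeak
      · exact htail j (by rw [Fin.val_mk] at h; omega)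
    rw [Fin.val_mk] at this
    omega
  · rintro ⟨hpeak, htail⟩
    have := lastDescent_le_of_eq_true s hpeak
    have := le_lastDescent_of_forall s (a := ⟨2 * n - k, by omega⟩) htail
    rw [Fin.val_mk] at *
    omega

end lastDescent

theorem append_peak_mem_ballotPaths_iff {n k : ℕ} (hk1 : 1 ≤ k) (hkn : k ≤ n) {l : List Bool} :
    l ++ true :: List.replicate k false ∈ ballotPaths 0 n n ↔
      l ∈ ballotPaths 0 (n - 1) (n - k) := by
  simp only [ballotPaths, Set.mem_ofPred_eq, staysNonneg_append, staysNonneg_cons_true,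
    List.count_append, List.count_cons, List.count_replicate, beq_true, beq_false, BEq.rfl,
    Bool.not_true, Bool.false_eq_true, ↓reduceIte, zero_add, add_zero]
  constructor
  · rintro ⟨ht, hf, hl, -⟩
    exact ⟨by omega, by omega, hl⟩
  · rintro ⟨ht, hf, hl⟩
    exact ⟨by omega, by omega, hl, staysNonneg_replicate_false (by omega)⟩

theorem ofFn_image_isDyckPath_lastDescent_eq {n k : ℕ} (hk1 : 1 ≤ k) (hkn : k ≤ n) :
    List.ofFn '' {s : Fin (2 * n) → Bool | IsDyckPath n s ∧ lastDescent n s = k} =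
      (· ++ true :: List.replicate k false) '' ballotPaths 0 (n - 1) (n - k) := by
  ext L
  constructor
  · rintro ⟨s, ⟨hdyck, hlast⟩, rfl⟩
    rw [isDyckPath_iff_ofFn_mem_ballotPaths] at hdyck
    rw [lastDescent_eq_iff s hk1 (by omega)] at hlast
    have hsplit : (List.ofFn s).take (2 * n - k - 1) ++ true :: List.replicate k false =
        List.ofFn s := by
      rw [← hlast, List.take_append_drop]
    exact ⟨_, (append_peak_mem_ballotPaths_iff hk1 hkn).1 (by rwa [hsplit]), hsplit⟩
  · rintro ⟨l, hl, rfl⟩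
    have hL := (append_peak_mem_ballotPaths_iff hk1 hkn).2 hl
    have hlen : (l ++ true :: List.replicate k false).length = 2 * n := by
      rw [length_of_mem_ballotPaths hL, two_mul]
    obtain ⟨s, hs⟩ : ∃ s : Fin (2 * n) → Bool, List.ofFn s = l ++ true :: List.replicate k false :=
      ⟨_, (List.ofFn_congr hlen _).symm.trans List.ofFn_getElem⟩
    refine ⟨s, ⟨?_, ?_⟩, hs⟩
    · rwa [isDyckPath_iff_ofFn_mem_ballotPaths, hs]
    · rw [lastDescent_eq_iff s hk1 (by omega), hs]
      exact List.drop_left' (by rw [length_of_mem_ballotPaths hl]; omega)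

theorem card_dyckPath_lastDescent_general (n k : ℕ) (hk1 : 1 ≤ k) (hkn : k ≤ n) :
    (2*n - k) *
      Nat.card {s : Fin (2*n) → Bool // IsDyckPath n s ∧ lastDescent n s = k}
      = k * Nat.choose (2*n - k) n := by
  have hcard : Nat.card {s : Fin (2*n) → Bool // IsDyckPath n s ∧ lastDescent n s = k} =
      (ballotPaths 0 (n - 1) (n - k)).ncard := by
    rw [← Set.ncard_image_of_injective _ (List.append_left_injective _),
      ← ofFn_image_isDyckPath_lastDescent_eq hk1 hkn,
      Set.ncard_image_of_injective _ List.ofFn_injective, ← Nat.card_coe_set_eq]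
    rfl
  have hballot := add_one_mul_ncard_ballotPaths_zero (a := n - 1) (b := n - k) (by omega)
  rw [hcard]
  rwa [show n - 1 + (n - k) + 1 = 2 * n - k by omega, show n - 1 + 1 - (n - k) = k by omega,
    show n - 1 + 1 = n by omega] at hballot

/-- The number of Dyck paths of semilength `n` with last descent length `k` is
`binom(2n-k, n) · k / (2n-k)`, stated in the cross-multiplied form. -/
theorem card_dyckPath_lastDescent (n k : ℕ) (hn : 1 ≤ n) (hk1 : 1 ≤ k) (hkn : k ≤ n) :
    (2*n - k) *
      Nat.card {s : Fin (2*n) → Bool // IsDyckPath n s ∧ lastDescent n s = k}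
      = k * Nat.choose (2*n - k) n :=
  card_dyckPath_lastDescent_general n k hk1 hkn
end

section
/- For every n ≥ 2 and every link pattern π′ of n strands that pairs 2n−2 with 2n−1, the number of link patterns μ of n strands with e(μ) = π′ equals the exposure number of π′. (Equivalently, if π′ is obtained by inserting a strand at the end of a link pattern π of n−1 strands with exposure number k, then the preimage of π′ under e consists of exactly k + 1 distinct link patterns.) -/
/-- The Temperley–Lieb generator `e` (acting at the sites `2n-2`, `2n-1`):
`e(μ) = μ` if `μ (2n-2) = 2n-1`; otherwise `e(μ)` pairs `2n-2` with `2n-1`,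
pairs `μ (2n-2)` with `μ (2n-1)`, and agrees with `μ` elsewhere. -/
def eFun (n : ℕ) (μ : Fin (2*n) → Fin (2*n)) : Fin (2*n) → Fin (2*n) := fun i =>
  if h : 1 ≤ n then
    let a : Fin (2*n) := ⟨2*n - 2, by omega⟩
    let b : Fin (2*n) := ⟨2*n - 1, by omega⟩
    if μ a = b then μ i
    else if i = a then b
    else if i = b then a
    else if i = μ a then μ b
    else if i = μ b then μ a
    else μ i
  else μ i

/-! The map `μ ↦ μ (2n-1)` identifies the fiber of `e` over `π'` with the left endpoints of the
outermost links of `π'`. If `e μ = π'`, then `μ` is recovered from `π'` by rewiring: pair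
`p := μ (2n-1)` with `2n-1` and `π' p` with `2n-2` (for `μ = π'` this is the link `(2n-2, 2n-1)`
itself). Conversely, rewiring `π'` along an outermost link `(p, q)` keeps it noncrossing, because
no link of `π'` separates `p` from `q` or encloses them. -/

open Function

variable {α : Type*}

section Rewire

variable [DecidableEq α] {σ μ π : α → α} {x y a b : α}

def rewire (σ : α → α) (x y : α) : α → α := fun i =>
  if i = x then y else if i = y then x else if i = σ x then σ y else if i = σ y then σ x else σ i

lemma rewire_apply_cases (i : α) :
    (i = x ∧ rewire σ x y i = y) ∨ (i = y ∧ rewire σ x y i = x) ∨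
      (i = σ x ∧ rewire σ x y i = σ y) ∨ (i = σ y ∧ rewire σ x y i = σ x) ∨
      rewire σ x y i = σ i := by
  unfold rewire
  split_ifs <;> simp_all

lemma rewire_apply_right (hxy : x ≠ y) : rewire σ x y y = x := by
  simp [rewire, hxy.symm]

lemma rewire_involutive (hσ : Involutive σ) (hσ' : ∀ i, σ i ≠ i) :
    Involutive (rewire σ x y) := by
  intro i; unfold rewire; split_ifs <;> grind [Involutive]

lemma rewire_ne_self (hσ : Involutive σ) (hσ' : ∀ i, σ i ≠ i) (hxy : x ≠ y) (i : α) :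
    rewire σ x y i ≠ i := by
  unfold rewire; split_ifs <;> grind [Involutive]

lemma rewire_apply_self (hσ : Involutive σ) : rewire σ x (σ x) = σ := by
  funext i; unfold rewire; split_ifs <;> grind [Involutive]

lemma rewire_rewire (hσ : Involutive σ) (hxy : x ≠ y) (hyx : σ y ≠ x) (hy : σ y ≠ y) :
    rewire (rewire σ x y) (σ y) y = σ := by
  funext i; unfold rewire; split_ifs <;> grind [Involutive]

def tlGenerator (a b : α) (σ : α → α) : α → α :=
  if σ a = b then σ else rewire σ a b

lemma rewire_eq_of_tlGenerator_eq (hμ : Involutive μ) (hμ' : ∀ i, μ i ≠ i) (hab : a ≠ b)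
    (h : tlGenerator a b μ = π) : rewire π (μ b) b = μ := by
  unfold tlGenerator at h
  split_ifs at h with hμa <;> subst h
  · rw [show μ b = a by rw [← hμa, hμ], ← hμa]
    exact rewire_apply_self hμ
  · exact rewire_rewire hμ hab (fun h => hμa (by rw [← h, hμ])) (hμ' b)

lemma tlGenerator_rewire (hπ : Involutive π) (hπa : π a = b) (hab : a ≠ b) {p : α}
    (hpb : p ≠ b) : tlGenerator a b (rewire π p b) = π := by
  have hπb : π b = a := by rw [← hπa, hπ]
  by_cases hpa : p = a
  · subst hpa
    have hself : rewire π p b = π := by rw [← hπa]; exact rewire_apply_self hπ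
    rw [tlGenerator, hself, if_pos hπa]
  · have hπp : π p ≠ b := fun h => hpa (by rw [← hπ p, h, hπb])
    have hrewire_a : rewire π p b a = π p := by
      simp [rewire, Ne.symm hpa, hab, hπb]
    rw [tlGenerator, hrewire_a, if_neg hπp]
    simpa [hπb] using rewire_rewire hπ hpb (by rwa [hπb, ne_comm]) (by rwa [hπb])

end Rewire

section LinkPattern

variable [LinearOrder α] {μ π : α → α} {a b p q : α}

def IsNoncrossing (σ : α → α) : Prop :=
  ∀ a b c d, a < b → b < c → c < d → σ a = c → σ b = d → False

def IsNoncrossingMatching (σ : α → α) : Prop :=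
  Involutive σ ∧ (∀ i, σ i ≠ i) ∧ IsNoncrossing σ

def IsOutermostLink (σ : α → α) (p q : α) : Prop :=
  p < q ∧ σ p = q ∧ ∀ c d, c < p → q < d → σ c ≠ d

def IsTopTwo (a b : α) : Prop :=
  a < b ∧ ∀ x, x ≠ a → x ≠ b → x < a

lemma IsTopTwo.le_right (h : IsTopTwo a b) (x : α) : x ≤ b := by
  by_contra hx
  rw [not_le] at hx
  exact lt_asymm (h.1.trans hx) (h.2 x (h.1.trans hx).ne' hx.ne')

lemma isOutermostLink_of_tlGenerator_eq (hab : IsTopTwo a b) (hμ : IsNoncrossingMatching μ)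
    (h : tlGenerator a b μ = π) : IsOutermostLink π (μ b) (π (μ b)) := by
  obtain ⟨hinv, hfp, hnc⟩ := hμ
  unfold tlGenerator at h
  split_ifs at h with hμa <;> subst h
  · rw [show μ b = a by rw [← hμa, hinv], hμa]
    exact ⟨hab.1, hμa, fun c d _ hd _ => (hab.le_right d).not_gt hd⟩
  have hμba : μ b ≠ a := fun h => hμa (by rw [← h, hinv])
  have hμba' : μ b ≠ μ a := fun h => hab.1.ne (hinv.injective h).symm
  have hμb_lt : μ b < a := hab.2 _ hμba (hfp b)
  have hlt : μ b < μ a := by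
    rcases lt_trichotomy (μ b) (μ a) with h | h | h
    · exact h
    · exact absurd h hμba'
    · exact (hnc (μ a) (μ b) a b h hμb_lt hab.1 (hinv a) (hinv b)).elim
  have hrewire : rewire μ a b (μ b) = μ a := by simp [rewire, hμba, hfp b, hμba']
  rw [hrewire]
  refine ⟨hlt, hrewire, fun x y hx hy hxy => ?_⟩
  rcases rewire_apply_cases (σ := μ) (x := a) (y := b) x with
    ⟨rfl, -⟩ | ⟨rfl, -⟩ | ⟨rfl, -⟩ | ⟨rfl, -⟩ | hx'
  · exact lt_asymm hx hμb_lt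
  · exact (hab.le_right _).not_gt hx
  · exact lt_asymm hx hlt
  · exact lt_irrefl _ hx
  · have hyb : y ≠ b := fun h => hx.ne (by rw [← hinv x, ← hx', hxy, h])
    exact hnc x (μ b) y b hx (hlt.trans hy) ((hab.le_right y).lt_of_ne hyb) (hx' ▸ hxy) (hinv b)

lemma isNoncrossing_rewire (hab : IsTopTwo a b) (hπ : IsNoncrossingMatching π) (hπa : π a = b)
    (hpq : IsOutermostLink π p q) (hpa : p ≠ a) : IsNoncrossing (rewire π p b) := by
  obtain ⟨hinv, hfp, hnc⟩ := hπ
  obtain ⟨hpq, rfl, hout⟩ := hpq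
  have hπb : π b = a := by rw [← hπa, hinv]
  have hpb : p ≠ b := (hpq.trans_le (hab.le_right _)).ne
  have hπp_lt : π p < a := by
    refine hab.2 _ (fun h => hpb ?_) (fun h => hpa (by rw [← hinv p, h, hπb]))
    rw [← hinv p, h, hπa]
  have link : ∀ u v, u < v → rewire π p b u = v →
      (u = p ∧ v = b) ∨ (u = π p ∧ v = a) ∨ π u = v := by
    intro u v huv h
    rcases rewire_apply_cases (σ := π) (x := p) (y := b) u with
      ⟨hu, h'⟩ | ⟨hu, -⟩ | ⟨hu, h'⟩ | ⟨hu, h'⟩ | h'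
    · exact Or.inl ⟨hu, h.symm.trans h'⟩
    · exact ((hab.le_right v).not_gt (hu ▸ huv)).elim
    · exact Or.inr (Or.inl ⟨hu, by rw [← h, h', hπb]⟩)
    · rw [hπb] at hu
      rw [h'] at h
      exact (lt_asymm (hu ▸ h ▸ huv) hπp_lt).elim
    · exact Or.inr (Or.inr (h'.symm.trans h))
  intro x y z w hxy hyz hzw hxz hyw
  rcases link x z (hxy.trans hyz) hxz with ⟨-, hzb⟩ | ⟨hxq, hza⟩ | hπxz
  · exact (hab.le_right w).not_gt (hzb ▸ hzw)
  · -- the only link of `rewire π p b` reaching past `a` is `(p, b)`, which starts left of `π p`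
    have hwb : w = b := by
      by_contra hwb
      exact lt_asymm (hza ▸ hzw) (hab.2 w (hza ▸ hzw).ne' hwb)
    have hyp : y = p := by
      rw [← rewire_involutive (x := p) (y := b) hinv hfp y, hyw, hwb, rewire_apply_right hpb]
    rw [hxq, hyp] at hxy
    exact lt_asymm hpq hxy
  · rcases link y w (hyz.trans hzw) hyw with ⟨hyp, -⟩ | ⟨hyq, -⟩ | hπyw
    · subst hyp
      rcases lt_trichotomy z (π y) with h | h | h
      · exact hnc x y z (π y) hxy hyz h hπxz rfl
      · exact hxy.ne (hinv.injective (hπxz.trans h))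
      · exact hout x z hxy h hπxz
    · subst hyq
      rcases lt_trichotomy x p with h | h | h
      · exact hout x z h hyz hπxz
      · exact hyz.ne (h ▸ hπxz)
      · exact hnc p x (π p) z h hxy hyz rfl hπxz
    · exact hnc x y z w hxy hyz hzw hπxz hπyw

lemma isNoncrossingMatching_rewire (hab : IsTopTwo a b) (hπ : IsNoncrossingMatching π)
    (hπa : π a = b) (hpq : IsOutermostLink π p q) : IsNoncrossingMatching (rewire π p b) := by
  by_cases hpa : p = a
  · subst hpa
    rw [← hπa, rewire_apply_self hπ.1]
    exact hπ
  have hpb : p ≠ b := (hpq.1.trans_le (hab.le_right q)).ne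
  exact ⟨rewire_involutive hπ.1 hπ.2.1, rewire_ne_self hπ.1 hπ.2.1 hpb,
    isNoncrossing_rewire hab hπ hπa hpq hpa⟩

def tlGeneratorFiberEquiv (hab : IsTopTwo a b) (hπ : IsNoncrossingMatching π) (hπa : π a = b) :
    {μ // IsNoncrossingMatching μ ∧ tlGenerator a b μ = π} ≃
      {pq : α × α // IsOutermostLink π pq.1 pq.2} where
  toFun μ := ⟨(μ.1 b, π (μ.1 b)), isOutermostLink_of_tlGenerator_eq hab μ.2.1 μ.2.2⟩
  invFun pq := ⟨rewire π pq.1.1 b, isNoncrossingMatching_rewire hab hπ hπa pq.2,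
    tlGenerator_rewire hπ.1 hπa hab.1.ne (pq.2.1.trans_le (hab.le_right _)).ne⟩
  left_inv μ := Subtype.ext (rewire_eq_of_tlGenerator_eq μ.2.1.1 μ.2.1.2.1 hab.1.ne μ.2.2)
  right_inv := by
    rintro ⟨⟨p, q⟩, hpq⟩
    have hpb : rewire π p b b = p := rewire_apply_right (hpq.1.trans_le (hab.le_right q)).ne
    ext <;> simp [hpb, hpq.2.1]

end LinkPattern

lemma isTopTwo_fin {n : ℕ} (hn : 1 ≤ n) :
    IsTopTwo (⟨2*n - 2, by omega⟩ : Fin (2*n)) ⟨2*n - 1, by omega⟩ := by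
  refine ⟨Fin.mk_lt_mk.2 (by omega), fun x hxa hxb => ?_⟩
  rw [Fin.ne_iff_vne] at hxa hxb
  rw [Fin.lt_def]
  have := x.isLt
  simp only at hxa hxb ⊢
  omega

lemma eFun_eq_tlGenerator {n : ℕ} (hn : 1 ≤ n) (μ : Fin (2*n) → Fin (2*n)) :
    eFun n μ = tlGenerator ⟨2*n - 2, by omega⟩ ⟨2*n - 1, by omega⟩ μ := by
  funext i
  rw [tlGenerator]
  split_ifs with h
  · simp only [eFun, dif_pos hn, h, if_true]
  · simp only [eFun, dif_pos hn, h, if_false]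
    rfl

/-- For `n ≥ 2` and a link pattern `π'` of `n` strands pairing `2n-2` with `2n-1`,
the number of link patterns `μ` with `e(μ) = π'` equals the exposure number of `π'`
(which is `k + 1` if `π'` arises from a pattern of `n-1` strands of exposure `k`). -/
theorem card_eFun_fiber (n : ℕ) (hn : 2 ≤ n) (π' : Fin (2*n) → Fin (2*n))
    (hπ' : IsLinkPattern n π')
    (hpair : π' ⟨2*n - 2, by omega⟩ = (⟨2*n - 1, by omega⟩ : Fin (2*n))) :
    Nat.card {μ : Fin (2*n) → Fin (2*n) // IsLinkPattern n μ ∧ eFun n μ = π'}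
      = exposure n π' := by
  have hn1 : 1 ≤ n := by omega
  simp only [eFun_eq_tlGenerator hn1]
  exact Nat.card_congr (tlGeneratorFiberEquiv (isTopTwo_fin hn1) hπ' hpair)
end

section
/- Let a(n, j) denote the number of link patterns of n strands with exposure number j. Then for every n ≥ 2 and every j with 1 ≤ j ≤ n, a(n, j) = Σ_{k = max(1, j−1)}^{n−1} a(n−1, k); that is, the exposure-number statistics satisfy the Catalan-tree succession rule (k) → (2)(3)⋯(k+1). -/
/-- `a n j`: the number of link patterns of `n` strands with exposure number `j`. -/
noncomputable def exposureCount (n j : ℕ) : ℕ :=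
  Nat.card {μ : Fin (2*n) → Fin (2*n) // IsLinkPattern n μ ∧ exposure n μ = j}

/-!
Removing the link `(p, 2n - 1)` through the last point leaves a link pattern `ν` of `n - 1`
strands with no link straddling the cut at `p`; conversely a link ending at the new last point
can be added at any unstraddled cut of `ν`. The unstraddled cuts of `ν` are the left ends of its
`k` outermost links and its right end, and adding the link at the `i`-th of them keeps exactly
`i` old outermost links outermost, so the result has exposure `i + 1`. Hence each `ν` of
exposure `k` has exactly one child of each exposure `1, …, k + 1`.
-/

open Finset

theorem Finset.card_filter_card_filter_lt_eq {α : Type*} [LinearOrder α] (s : Finset α)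
    (i : ℕ) :
    #{x ∈ s | #{y ∈ s | y < x} = i} = if i < #s then 1 else 0 := by
  set rank : α → ℕ := fun x => #{y ∈ s | y < x}
  have hmono : StrictMonoOn rank s := fun x hx x' _ hxx' =>
    card_lt_card <| (ssubset_iff_of_subset fun y hy => by
      simp only [mem_filter] at hy ⊢; exact ⟨hy.1, hy.2.trans hxx'⟩).2
      ⟨x, by simpa using ⟨hx, hxx'⟩, by simp⟩
  have hlt : ∀ x ∈ s, rank x < #s := fun x hx =>
    card_lt_card (filter_ssubset.2 ⟨x, hx, lt_irrefl x⟩)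
  have himage : s.image rank = range #s :=
    eq_of_subset_of_card_le (fun k hk => by
      obtain ⟨x, hx, rfl⟩ := mem_image.1 hk; exact mem_range.2 (hlt x hx))
      (by rw [card_range, card_image_of_injOn hmono.injOn])
  split_ifs with hi
  · obtain ⟨x, hx, hxi⟩ := mem_image.1 (himage ▸ mem_range.2 hi)
    refine card_eq_one.2 ⟨x, ext fun y => ?_⟩
    simp only [mem_filter, mem_singleton]
    exact ⟨fun ⟨hy, hyi⟩ => hmono.injOn hy hx (hyi.trans hxi.symm),
      by rintro rfl; exact ⟨hx, hxi⟩⟩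
  · exact card_eq_zero.2 (filter_eq_empty_iff.2 fun x hx hxi => hi (hxi ▸ hlt x hx))

structure IsNoncrossingMatching_s12 {N : ℕ} (μ : Fin N → Fin N) : Prop where
  involutive : Function.Involutive μ
  ne_self : ∀ i, μ i ≠ i
  not_crossing : ∀ a b, a < b → b < μ a → μ a < μ b → False

theorem isLinkPattern_iff {n : ℕ} {μ : Fin (2 * n) → Fin (2 * n)} :
    IsLinkPattern n μ ↔ IsNoncrossingMatching_s12 μ :=
  ⟨fun ⟨hinv, hne, hnc⟩ =>
    ⟨hinv, hne, fun a b hab hb hc => hnc a b _ _ hab hb hc rfl rfl⟩,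
    fun ⟨hinv, hne, hnc⟩ => ⟨hinv, hne, fun a b c d hab hbc hcd hac hbd =>
      hnc a b hab (hac ▸ hbc) (hac ▸ hbd ▸ hcd)⟩⟩

section

variable {N : ℕ}

def outerStarts (μ : Fin N → Fin N) : Finset (Fin N) :=
  {a | a < μ a ∧ ∀ c < a, μ c ≤ μ a}

/-- Cut positions `p` (between the points `p - 1` and `p`) straddled by no link. -/
def gaps (μ : Fin N → Fin N) : Finset (Fin (N + 1)) :=
  {p | ∀ y : Fin N, y.castSucc < p → (μ y).castSucc < p}

theorem mem_gaps {μ : Fin N → Fin N} {p : Fin (N + 1)} :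
    p ∈ gaps μ ↔ ∀ y : Fin N, y.castSucc < p → (μ y).castSucc < p := by
  simp [gaps]

theorem last_mem_gaps (μ : Fin N → Fin N) : Fin.last N ∈ gaps μ :=
  mem_gaps.2 fun _ _ => Fin.castSucc_lt_last _

namespace IsNoncrossingMatching_s12

variable {μ : Fin N → Fin N} (hμ : IsNoncrossingMatching_s12 μ)
include hμ

theorem castSucc_mem_gaps_iff (a : Fin N) : a.castSucc ∈ gaps μ ↔ a ∈ outerStarts μ := by
  simp only [mem_gaps, outerStarts, mem_filter, mem_univ, true_and, Fin.castSucc_lt_castSucc_iff]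
  constructor
  · intro h
    have ha : a < μ a := by
      refine lt_of_le_of_ne (not_lt.1 fun hlt => ?_) (hμ.ne_self a).symm
      simpa [hμ.involutive a] using h (μ a) hlt
    exact ⟨ha, fun c hc => (h c hc).le.trans ha.le⟩
  · rintro ⟨ha, hout⟩ y hy
    by_contra! hay
    have hya : μ y ≠ a := fun h => by
      have := hμ.involutive y; rw [h] at this; exact absurd (this ▸ ha) (not_lt.2 hy.le)
    rcases (hout y hy).lt_or_eq with hlt | heq
    · exact hμ.not_crossing y a hy (lt_of_le_of_ne hay hya.symm) hlt
    · exact hy.ne (hμ.involutive.injective heq)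

theorem two_mul_card_outerStarts_le : 2 * #(outerStarts μ) ≤ N := by
  have hdisj : Disjoint (outerStarts μ) ((outerStarts μ).image μ) := by
    simp only [disjoint_left, mem_image, outerStarts, mem_filter, mem_univ, true_and]
    rintro _ ⟨hlt, -⟩ ⟨a, ⟨ha, -⟩, rfl⟩
    rw [hμ.involutive a] at hlt
    exact lt_asymm ha hlt
  calc 2 * #(outerStarts μ)
      = #(outerStarts μ ∪ (outerStarts μ).image μ) := by
        rw [card_union_of_disjoint hdisj, card_image_of_injective _ hμ.involutive.injective]; ring
    _ ≤ N := (card_le_univ _).trans_eq (Fintype.card_fin N)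

theorem card_outerStarts_pos (hN : 0 < N) : 0 < #(outerStarts μ) :=
  card_pos.2 ⟨⟨0, hN⟩, by
    simp only [outerStarts, mem_filter, mem_univ, true_and]
    exact ⟨lt_of_le_of_ne (Nat.zero_le _) (hμ.ne_self _).symm,
      fun c hc => absurd hc (Nat.not_lt_zero c)⟩⟩

theorem gaps_eq : gaps μ = insert (Fin.last N) ((outerStarts μ).map Fin.castSuccEmb) := by
  ext p
  rcases Fin.eq_castSucc_or_eq_last p with ⟨a, rfl⟩ | rfl
  · simp [hμ.castSucc_mem_gaps_iff, (Fin.castSucc_lt_last a).ne]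
  · simp [last_mem_gaps]

theorem card_gaps : #(gaps μ) = #(outerStarts μ) + 1 := by
  rw [hμ.gaps_eq, card_insert_of_notMem (by simp), card_map]

theorem of_semiconj {M : ℕ} {e : Fin M → Fin N} (he : StrictMono e) {ν : Fin M → Fin M}
    (h : Function.Semiconj e ν μ) : IsNoncrossingMatching_s12 ν where
  involutive y := he.injective (by rw [h, h, hμ.involutive])
  ne_self y hy := hμ.ne_self (e y) (by rw [← h, hy])
  not_crossing a b hab hb hc := hμ.not_crossing (e a) (e b) (he hab)
    (by rw [← h]; exact he hb) (by rw [← h, ← h]; exact he hc)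

end IsNoncrossingMatching_s12

def liftPoint (p : Fin (N + 1)) (y : Fin N) : Fin (N + 2) :=
  (p.succAbove y).castSucc

variable {p : Fin (N + 1)}

theorem strictMono_liftPoint (p : Fin (N + 1)) : StrictMono (liftPoint p) :=
  Fin.strictMono_castSucc.comp (Fin.strictMono_succAbove p)

theorem liftPoint_ne_castSucc (p : Fin (N + 1)) (y : Fin N) : liftPoint p y ≠ p.castSucc :=
  fun h => Fin.succAbove_ne p y (Fin.castSucc_injective _ h)

theorem liftPoint_lt_last (p : Fin (N + 1)) (y : Fin N) : liftPoint p y < Fin.last (N + 1) :=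
  Fin.castSucc_lt_last _

theorem liftPoint_lt_castSucc_iff {y : Fin N} : liftPoint p y < p.castSucc ↔ y.castSucc < p :=
  Fin.castSucc_lt_castSucc_iff.trans (Fin.succAbove_lt_iff_castSucc_lt p y)

theorem castSucc_lt_liftPoint_iff {y : Fin N} :
    p.castSucc < liftPoint p y ↔ ¬ y.castSucc < p := by
  rw [← not_le, le_iff_lt_or_eq, or_iff_left (liftPoint_ne_castSucc p y),
    liftPoint_lt_castSucc_iff]

theorem eq_last_or_eq_castSucc_or_eq_liftPoint (p : Fin (N + 1)) (x : Fin (N + 2)) :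
    x = Fin.last (N + 1) ∨ x = p.castSucc ∨ ∃ y, x = liftPoint p y := by
  rcases Fin.eq_castSucc_or_eq_last x with ⟨x, rfl⟩ | rfl
  · rcases Fin.eq_self_or_eq_succAbove p x with rfl | ⟨y, rfl⟩
    · exact Or.inr (Or.inl rfl)
    · exact Or.inr (Or.inr ⟨y, rfl⟩)
  · exact Or.inl rfl

/-- The matching `μ` with the link `(p, N + 1)` added, the old points being relabelled by
`liftPoint p`. -/
def insertLink (μ : Fin N → Fin N) (p : Fin (N + 1)) : Fin (N + 2) → Fin (N + 2) :=
  Fin.snoc (α := fun _ => Fin (N + 2))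
    (Fin.insertNth (α := fun _ => Fin (N + 2)) p (Fin.last (N + 1)) (liftPoint p ∘ μ))
    p.castSucc

variable {μ : Fin N → Fin N}

@[simp]
theorem insertLink_last : insertLink μ p (Fin.last (N + 1)) = p.castSucc :=
  Fin.snoc_last (α := fun _ => Fin (N + 2)) _ _

@[simp]
theorem insertLink_castSucc : insertLink μ p p.castSucc = Fin.last (N + 1) := by
  simp [insertLink]

@[simp]
theorem insertLink_liftPoint (y : Fin N) :
    insertLink μ p (liftPoint p y) = liftPoint p (μ y) := by
  simp [insertLink, liftPoint]

theorem insertLink_inj {ν : Fin N → Fin N} {q : Fin (N + 1)} :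
    insertLink μ p = insertLink ν q ↔ μ = ν ∧ p = q := by
  refine ⟨fun h => ?_, by rintro ⟨rfl, rfl⟩; rfl⟩
  obtain rfl : p = q := Fin.castSucc_injective _ (by simpa using congrFun h (Fin.last _))
  refine ⟨funext fun y => (strictMono_liftPoint p).injective ?_, rfl⟩
  simpa using congrFun h (liftPoint p y)

theorem isNoncrossingMatching_insertLink (hμ : IsNoncrossingMatching_s12 μ) (hp : p ∈ gaps μ) :
    IsNoncrossingMatching_s12 (insertLink μ p) where
  involutive x := by
    rcases eq_last_or_eq_castSucc_or_eq_liftPoint p x with rfl | rfl | ⟨y, rfl⟩ <;>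
      simp [hμ.involutive _]
  ne_self x := by
    rcases eq_last_or_eq_castSucc_or_eq_liftPoint p x with rfl | rfl | ⟨y, rfl⟩
    · simp
    · simpa using (Fin.castSucc_lt_last p).ne'
    · simpa [(strictMono_liftPoint p).injective.eq_iff] using hμ.ne_self y
  not_crossing a b hab hb hc := by
    rcases eq_last_or_eq_castSucc_or_eq_liftPoint p a with rfl | rfl | ⟨y, rfl⟩
    · exact (Fin.le_last b).not_gt hab
    · simp only [insertLink_castSucc] at hc
      exact (Fin.le_last _).not_gt hc
    rcases eq_last_or_eq_castSucc_or_eq_liftPoint p b with rfl | rfl | ⟨z, rfl⟩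
    · exact (Fin.le_last _).not_gt hb
    · -- the link of `y` would straddle the gap `p`
      simp only [insertLink_liftPoint, castSucc_lt_liftPoint_iff] at hb
      exact hb (mem_gaps.1 hp y (liftPoint_lt_castSucc_iff.1 hab))
    · simp only [insertLink_liftPoint, (strictMono_liftPoint p).lt_iff_lt] at hab hb hc
      exact hμ.not_crossing y z hab hb hc

theorem liftPoint_mem_outerStarts_insertLink_iff (y : Fin N) :
    liftPoint p y ∈ outerStarts (insertLink μ p) ↔
      y ∈ outerStarts μ ∧ y.castSucc < p := by
  simp only [outerStarts, mem_filter, mem_univ, true_and, insertLink_liftPoint,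
    (strictMono_liftPoint p).lt_iff_lt]
  constructor
  · rintro ⟨hy, hout⟩
    have hyp : y.castSucc < p := by
      by_contra hyp
      have := hout p.castSucc (castSucc_lt_liftPoint_iff.2 hyp)
      rw [insertLink_castSucc] at this
      exact (liftPoint_lt_last p _).not_ge this
    refine ⟨⟨hy, fun c hc => ?_⟩, hyp⟩
    simpa [(strictMono_liftPoint p).le_iff_le] using
      hout (liftPoint p c) (strictMono_liftPoint p hc)
  · rintro ⟨⟨hy, hout⟩, hyp⟩
    refine ⟨hy, fun c hc => ?_⟩
    rcases eq_last_or_eq_castSucc_or_eq_liftPoint p c with rfl | rfl | ⟨z, rfl⟩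
    · exact absurd hc (liftPoint_lt_last p y).not_gt
    · exact absurd hc (liftPoint_lt_castSucc_iff.2 hyp).not_gt
    · simpa [(strictMono_liftPoint p).le_iff_le] using
        hout z ((strictMono_liftPoint p).lt_iff_lt.1 hc)

theorem outerStarts_insertLink :
    outerStarts (insertLink μ p) =
      insert p.castSucc ({y ∈ outerStarts μ | y.castSucc < p}.image (liftPoint p)) := by
  ext x
  rcases eq_last_or_eq_castSucc_or_eq_liftPoint p x with rfl | rfl | ⟨y, rfl⟩
  · simp [outerStarts, not_lt.2 (Fin.le_last _), (Fin.castSucc_lt_last p).ne',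
      (liftPoint_lt_last p _).ne]
  · simp [outerStarts, Fin.castSucc_lt_last, Fin.le_last]
  · simp [liftPoint_mem_outerStarts_insertLink_iff, liftPoint_ne_castSucc,
      (strictMono_liftPoint p).injective.eq_iff]

theorem card_outerStarts_insertLink (hμ : IsNoncrossingMatching_s12 μ) :
    #(outerStarts (insertLink μ p)) = #{q ∈ gaps μ | q < p} + 1 := by
  rw [outerStarts_insertLink, card_insert_of_notMem (by simp [liftPoint_ne_castSucc]),
    card_image_of_injective _ (strictMono_liftPoint p).injective, hμ.gaps_eq,
    filter_insert, if_neg (Fin.le_last p).not_gt, filter_map, card_map]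
  rfl

theorem IsNoncrossingMatching_s12.exists_insertLink_eq {μ : Fin (N + 2) → Fin (N + 2)}
    (hμ : IsNoncrossingMatching_s12 μ) :
    ∃ ν p, IsNoncrossingMatching_s12 ν ∧ p ∈ gaps ν ∧ insertLink ν p = μ := by
  set p := (μ (Fin.last (N + 1))).castPred (hμ.ne_self _)
  have hp : p.castSucc = μ (Fin.last (N + 1)) := Fin.castSucc_castPred _ _
  have hμp : μ p.castSucc = Fin.last (N + 1) := by rw [hp, hμ.involutive]
  have hlift : ∀ y, ∃ z, μ (liftPoint p y) = liftPoint p z := by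
    intro y
    rcases eq_last_or_eq_castSucc_or_eq_liftPoint p (μ (liftPoint p y)) with h | h | h
    · refine absurd (hμ.involutive.injective ?_) (liftPoint_ne_castSucc p y)
      rw [h, ← hμp]
    · refine absurd (hμ.involutive.injective ?_) (liftPoint_lt_last p y).ne
      rw [h, hp]
    · exact h
  choose ν hν using hlift
  have hνμ : Function.Semiconj (liftPoint p) ν μ := fun y => (hν y).symm
  refine ⟨ν, p, hμ.of_semiconj (strictMono_liftPoint p) hνμ, mem_gaps.2 fun y hy => ?_, ?_⟩
  · -- otherwise the links of `liftPoint p y` and `p.castSucc` cross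
    by_contra hνy
    refine hμ.not_crossing (liftPoint p y) p.castSucc (liftPoint_lt_castSucc_iff.2 hy) ?_ ?_
    · rw [hν]; exact castSucc_lt_liftPoint_iff.2 hνy
    · rw [hν, hμp]; exact liftPoint_lt_last p _
  · funext x
    rcases eq_last_or_eq_castSucc_or_eq_liftPoint p x with rfl | rfl | ⟨y, rfl⟩
    · rw [insertLink_last, hp]
    · rw [insertLink_castSucc, hμp]
    · rw [insertLink_liftPoint, hν]

end

theorem exposure_eq_card_outerStarts (n : ℕ) (μ : Fin (2 * n) → Fin (2 * n)) :
    exposure n μ = #(outerStarts μ) := by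
  have houter : ∀ a, (∀ c d, c < a → μ a < d → μ c ≠ d) ↔ ∀ c < a, μ c ≤ μ a :=
    fun a => ⟨fun h c hc => not_lt.1 fun hlt => h c _ hc hlt rfl,
      fun h c d hc hd hcd => (h c hc).not_gt (hcd ▸ hd)⟩
  rw [exposure, ← Nat.card_eq_finsetCard]
  refine Nat.card_congr
    { toFun := fun q => ⟨q.1.1, ?_⟩
      invFun := fun a => ⟨(a, μ a), ?_⟩
      left_inv := fun q => Subtype.ext (Prod.ext rfl q.2.2.1)
      right_inv := fun _ => rfl }
  · simp only [outerStarts, mem_filter, mem_univ, true_and, ← houter, q.2.2.1]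
    exact ⟨q.2.1, q.2.2.2⟩
  · obtain ⟨a, ha⟩ := a
    simp only [outerStarts, mem_filter, mem_univ, true_and] at ha
    exact ⟨ha.1, rfl, (houter a).2 ha.2⟩

open scoped Classical in
theorem exposureCount_eq_card (n j : ℕ) :
    exposureCount n j =
      #{μ : Fin (2 * n) → Fin (2 * n) | IsNoncrossingMatching_s12 μ ∧ #(outerStarts μ) = j} := by
  simp only [exposureCount, isLinkPattern_iff, exposure_eq_card_outerStarts]
  rw [Nat.card_eq_fintype_card, Fintype.card_subtype]

open scoped Classical in
theorem card_filter_card_outerStarts_eq (N : ℕ) {j : ℕ} (hj : 1 ≤ j) :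
    #{μ : Fin (N + 2) → Fin (N + 2) | IsNoncrossingMatching_s12 μ ∧ #(outerStarts μ) = j} =
      #{ν : Fin N → Fin N | IsNoncrossingMatching_s12 ν ∧ j ≤ #(outerStarts ν) + 1} := by
  set S : Finset (Fin N → Fin N) := {ν | IsNoncrossingMatching_s12 ν}
  set T : (Fin N → Fin N) → Finset (Fin (N + 1)) :=
    fun ν => {p ∈ gaps ν | #{q ∈ gaps ν | q < p} = j - 1}
  calc _ = #(S.sigma T) := by
        refine (card_bij (fun x _ => insertLink x.1 x.2) ?_ ?_ ?_).symm
        · rintro ⟨ν, p⟩ hνp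
          simp only [S, T, mem_sigma, mem_filter, mem_univ, true_and] at hνp ⊢
          refine ⟨isNoncrossingMatching_insertLink hνp.1 hνp.2.1, ?_⟩
          rw [card_outerStarts_insertLink hνp.1, hνp.2.2]
          omega
        · rintro ⟨ν, p⟩ - ⟨ν', p'⟩ - h
          obtain ⟨rfl, rfl⟩ := insertLink_inj.1 h
          rfl
        · intro μ hμ
          simp only [mem_filter, mem_univ, true_and] at hμ
          obtain ⟨ν, p, hν, hp, rfl⟩ := hμ.1.exists_insertLink_eq
          refine ⟨⟨ν, p⟩, ?_, rfl⟩
          simp only [S, T, mem_sigma, mem_filter, mem_univ, true_and]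
          have := card_outerStarts_insertLink (p := p) hν
          exact ⟨hν, hp, by omega⟩
    _ = ∑ ν ∈ S, if j - 1 < #(gaps ν) then 1 else 0 := by
        simp only [card_sigma, T, card_filter_card_filter_lt_eq]
    _ = _ := by
        rw [sum_boole, Nat.cast_id, filter_filter]
        refine congrArg card (filter_congr fun ν _ => ?_)
        constructor
        · rintro ⟨hν, h⟩
          exact ⟨hν, by rw [hν.card_gaps] at h; omega⟩
        · rintro ⟨hν, h⟩
          exact ⟨hν, by rw [hν.card_gaps]; omega⟩

theorem exposureCount_succession_general (n j : ℕ) (hn : 2 ≤ n) (hj1 : 1 ≤ j) :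
    exposureCount n j = ∑ k ∈ Finset.Icc (max 1 (j - 1)) (n - 1), exposureCount (n - 1) k := by
  classical
  obtain ⟨m, rfl⟩ : ∃ m, n = m + 1 := ⟨n - 1, by omega⟩
  -- `Fin (2 * (m + 1))` and `Fin (2 * m + 2)` agree definitionally
  rw [Nat.add_sub_cancel,
    (exposureCount_eq_card _ _).trans (card_filter_card_outerStarts_eq (2 * m) hj1),
    card_eq_sum_card_fiberwise (f := fun ν => #(outerStarts ν)) (t := Icc (max 1 (j - 1)) m)]
  · refine sum_congr rfl fun k hk => ?_
    rw [exposureCount_eq_card, filter_filter]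
    refine congrArg card (filter_congr fun ν _ => ?_)
    rw [mem_Icc] at hk
    constructor
    · rintro ⟨⟨hν, -⟩, rfl⟩
      exact ⟨hν, rfl⟩
    · rintro ⟨hν, rfl⟩
      exact ⟨⟨hν, by omega⟩, rfl⟩
  · intro ν hν
    obtain ⟨hν, hjν⟩ := (mem_filter.1 (mem_coe.1 hν)).2
    have := hν.card_outerStarts_pos (by omega)
    have := hν.two_mul_card_outerStarts_le
    simp only [mem_coe, mem_Icc]
    omega

/-- The exposure-number statistics satisfy the Catalan-tree succession rule
`(k) → (2)(3)⋯(k+1)`: for `n ≥ 2` and `1 ≤ j ≤ n`,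
`a(n, j) = Σ_{k = max(1, j-1)}^{n-1} a(n-1, k)`. -/
theorem exposureCount_succession (n j : ℕ) (hn : 2 ≤ n) (hj1 : 1 ≤ j) (hjn : j ≤ n) :
    exposureCount n j = ∑ k ∈ Finset.Icc (max 1 (j - 1)) (n - 1), exposureCount (n - 1) k :=
  exposureCount_succession_general n j hn hj1
end

section
/- For every n ≥ 1, the number of 123-avoiding permutations of {1, …, n} equals the n-th Catalan number C_n = (1/(n+1))·binom(2n, n). -/
/-- Monotone superdiagonal sequences: `i ≤ f i < k` on `[0,k)`, zero elsewhere. -/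
def MonSD (k : ℕ) : Type :=
  {f : ℕ → ℕ // (∀ i j, i ≤ j → j < k → f i ≤ f j) ∧ (∀ i, i < k → i ≤ f i ∧ f i < k)
    ∧ ∀ i, k ≤ i → f i = 0}

instance MonSD.finite (k : ℕ) : Finite (MonSD k) := by
  have : Function.Injective
      (fun f : MonSD k => (fun i : Fin k => (⟨f.1 i, (f.2.2.1 i i.2).2⟩ : Fin k))) := by
    intro f g h
    apply Subtype.ext; funext i
    rcases lt_or_ge i k with hi | hi
    · have := congrFun h ⟨i, hi⟩
      simpa using congrArg (Fin.val) this
    · rw [f.2.2.2 i hi, g.2.2.2 i hi]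
  exact Finite.of_injective _ this

def monSDZero : MonSD 0 := ⟨fun _ => 0, by simp, by simp, by simp⟩

instance : Unique (MonSD 0) where
  default := monSDZero
  uniq f := by
    apply Subtype.ext; funext i; exact (f.2.2.2 i (Nat.zero_le i)).trans rfl

lemma monSD_exists_fix (n : ℕ) (f : MonSD (n+1)) : ∃ j, f.1 j = j ∧ j < n + 1 := by
  refine ⟨n, ?_, n.lt_succ_self⟩
  have := f.2.2.1 n n.lt_succ_self
  omega

/-- least fixed point -/
def theJ (n : ℕ) (f : MonSD (n+1)) : ℕ := Nat.find (monSD_exists_fix n f)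

lemma theJ_fix (n : ℕ) (f : MonSD (n+1)) : f.1 (theJ n f) = theJ n f :=
  (Nat.find_spec (monSD_exists_fix n f)).1

lemma theJ_lt (n : ℕ) (f : MonSD (n+1)) : theJ n f < n + 1 :=
  (Nat.find_spec (monSD_exists_fix n f)).2

lemma theJ_min (n : ℕ) (f : MonSD (n+1)) {i : ℕ} (hi : i < theJ n f) : f.1 i ≠ i :=
  fun h => Nat.find_min (monSD_exists_fix n f) hi ⟨h, by have := theJ_lt n f; omega⟩

def headPart (j : ℕ) (f : ℕ → ℕ) : ℕ → ℕ := fun i => if i < j then f i - 1 else 0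
def tailPart (j m : ℕ) (f : ℕ → ℕ) : ℕ → ℕ :=
  fun t => if t < m then f (j + 1 + t) - (j + 1) else 0
def glue (n j : ℕ) (g h : ℕ → ℕ) : ℕ → ℕ :=
  fun i => if i < j then g i + 1 else if i = j then j else if i ≤ n then h (i - (j+1)) + (j+1)
    else 0

lemma headPart_lt {j : ℕ} (f : ℕ → ℕ) {i : ℕ} (hi : i < j) : headPart j f i = f i - 1 :=
  if_pos hi
lemma headPart_ge {j : ℕ} (f : ℕ → ℕ) {i : ℕ} (hi : j ≤ i) : headPart j f i = 0 :=
  if_neg (by omega)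
lemma tailPart_lt {j m : ℕ} (f : ℕ → ℕ) {t : ℕ} (ht : t < m) :
    tailPart j m f t = f (j + 1 + t) - (j + 1) := if_pos ht
lemma tailPart_ge {j m : ℕ} (f : ℕ → ℕ) {t : ℕ} (ht : m ≤ t) : tailPart j m f t = 0 :=
  if_neg (by omega)
lemma glue_lt {n j : ℕ} (g h : ℕ → ℕ) {i : ℕ} (hi : i < j) : glue n j g h i = g i + 1 :=
  if_pos hi
lemma glue_eq {n j : ℕ} (g h : ℕ → ℕ) : glue n j g h j = j := by
  unfold glue; rw [if_neg (lt_irrefl j), if_pos rfl]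
lemma glue_gt {n j : ℕ} (g h : ℕ → ℕ) {i : ℕ} (hji : j < i) (hin : i ≤ n) :
    glue n j g h i = h (i - (j+1)) + (j+1) := by
  unfold glue; rw [if_neg (by omega), if_neg (by omega), if_pos hin]
lemma glue_junk {n j : ℕ} (g h : ℕ → ℕ) {i : ℕ} (hji : j < i) (hin : n < i) :
    glue n j g h i = 0 := by
  unfold glue; rw [if_neg (by omega), if_neg (by omega), if_neg (by omega)]

lemma headPart_mem (n : ℕ) (f : MonSD (n+1)) :
    (∀ i j, i ≤ j → j < theJ n f → headPart (theJ n f) f.1 i ≤ headPart (theJ n f) f.1 j) ∧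
    (∀ i, i < theJ n f → i ≤ headPart (theJ n f) f.1 i ∧ headPart (theJ n f) f.1 i < theJ n f) ∧
    ∀ i, theJ n f ≤ i → headPart (theJ n f) f.1 i = 0 := by
  set j := theJ n f with hj
  have hjlt : j < n + 1 := theJ_lt n f
  have hjfix : f.1 j = j := theJ_fix n f
  refine ⟨?_, ?_, ?_⟩
  · intro a b hab hb
    rw [headPart_lt _ hb, headPart_lt _ (lt_of_le_of_lt hab hb)]
    exact Nat.sub_le_sub_right (f.2.1 a b hab (by omega)) 1
  · intro i hi
    rw [headPart_lt _ hi]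
    have h1 : i ≤ f.1 i := (f.2.2.1 i (by omega)).1
    have h2 : f.1 i ≠ i := theJ_min n f hi
    have h3 : f.1 i ≤ f.1 j := f.2.1 i j (le_of_lt hi) hjlt
    constructor <;> omega
  · intro i hi; exact headPart_ge _ hi

lemma tailPart_mem (n : ℕ) (f : MonSD (n+1)) :
    (∀ a b, a ≤ b → b < n - theJ n f →
      tailPart (theJ n f) (n - theJ n f) f.1 a ≤ tailPart (theJ n f) (n - theJ n f) f.1 b) ∧
    (∀ t, t < n - theJ n f → t ≤ tailPart (theJ n f) (n - theJ n f) f.1 t ∧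
      tailPart (theJ n f) (n - theJ n f) f.1 t < n - theJ n f) ∧
    ∀ t, n - theJ n f ≤ t → tailPart (theJ n f) (n - theJ n f) f.1 t = 0 := by
  set j := theJ n f with hj
  have hjlt : j < n + 1 := theJ_lt n f
  refine ⟨?_, ?_, ?_⟩
  · intro a b hab hb
    rw [tailPart_lt _ hb, tailPart_lt _ (lt_of_le_of_lt hab hb)]
    exact Nat.sub_le_sub_right (f.2.1 _ _ (by omega) (by omega)) _
  · intro t ht
    rw [tailPart_lt _ ht]
    have h1 := f.2.2.1 (j + 1 + t) (by omega)
    omega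
  · intro t ht; exact tailPart_ge _ ht

lemma glue_mem (n : ℕ) (j : ℕ) (hjn : j < n + 1) (g : MonSD j) (h : MonSD (n - j)) :
    (∀ a b, a ≤ b → b < n + 1 → glue n j g.1 h.1 a ≤ glue n j g.1 h.1 b) ∧
    (∀ i, i < n + 1 → i ≤ glue n j g.1 h.1 i ∧ glue n j g.1 h.1 i < n + 1) ∧
    ∀ i, n + 1 ≤ i → glue n j g.1 h.1 i = 0 := by
  have hbd := fun i hi => g.2.2.1 i hi
  have hbd' := fun i hi => h.2.2.1 i hi
  refine ⟨?_, ?_, ?_⟩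
  · intro a b hab hb
    rcases lt_trichotomy b j with h1 | h1 | h1
    · rw [glue_lt _ _ h1, glue_lt _ _ (lt_of_le_of_lt hab h1)]
      exact Nat.succ_le_succ (g.2.1 a b hab h1)
    · subst h1
      rcases lt_or_eq_of_le hab with h2 | h2
      · rw [glue_lt _ _ h2, glue_eq]
        have := (hbd a h2).2; omega
      · subst h2; exact le_refl _
    · rw [glue_gt _ _ h1 (by omega)]
      rcases lt_trichotomy a j with h2 | h2 | h2
      · rw [glue_lt _ _ h2]
        have := (hbd a h2).2; omega
      · subst h2; rw [glue_eq]; omega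
      · rw [glue_gt _ _ h2 (by omega)]
        have := h.2.1 (a - (j + 1)) (b - (j + 1)) (by omega) (by omega)
        omega
  · intro i hi
    rcases lt_trichotomy i j with h1 | h1 | h1
    · rw [glue_lt _ _ h1]
      have := hbd i h1; omega
    · subst h1; rw [glue_eq]; omega
    · rw [glue_gt _ _ h1 (by omega)]
      have := hbd' (i - (j + 1)) (by omega)
      omega
  · intro i hi
    exact glue_junk _ _ (by omega) (by omega)

def monSDToFun (n : ℕ) (f : MonSD (n+1)) : (j : Fin (n + 1)) × (MonSD j × MonSD (n - j)) :=
  ⟨⟨theJ n f, theJ_lt n f⟩,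
    ⟨headPart (theJ n f) f.1, headPart_mem n f⟩,
    ⟨tailPart (theJ n f) (n - theJ n f) f.1, tailPart_mem n f⟩⟩

def monSDInvFun (n : ℕ) (x : (j : Fin (n + 1)) × (MonSD j × MonSD (n - j))) : MonSD (n+1) :=
  ⟨glue n x.1 x.2.1.1 x.2.2.1, glue_mem n x.1 x.1.2 x.2.1 x.2.2⟩

lemma monSD_left_inv (n : ℕ) : Function.LeftInverse (monSDInvFun n) (monSDToFun n) := by
  intro f
  apply Subtype.ext
  funext i
  show glue n (theJ n f) (headPart (theJ n f) f.1) (tailPart (theJ n f) (n - theJ n f) f.1) i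
    = f.1 i
  set j := theJ n f with hj
  have hjlt : j < n + 1 := theJ_lt n f
  have hjfix : f.1 j = j := theJ_fix n f
  rcases lt_trichotomy i j with h1 | h1 | h1
  · rw [glue_lt _ _ h1, headPart_lt _ h1]
    have h2 : i ≤ f.1 i := (f.2.2.1 i (by omega)).1
    have h3 : f.1 i ≠ i := theJ_min n f h1
    omega
  · subst h1; rw [glue_eq]; omega
  · rcases le_or_gt i n with h2 | h2
    · rw [glue_gt _ _ h1 h2, tailPart_lt _ (by omega : i - (j+1) < n - j)]
      have h4 : j + 1 + (i - (j + 1)) = i := by omega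
      rw [h4]
      have h5 : i ≤ f.1 i := (f.2.2.1 i (by omega)).1
      omega
    · rw [glue_junk _ _ h1 h2]
      exact (f.2.2.2 i (by omega)).symm

lemma theJ_glue (n : ℕ) (j : Fin (n+1)) (g : MonSD j) (h : MonSD (n - j))
    (F : MonSD (n+1)) (hF : F.1 = glue n j g.1 h.1) : theJ n F = (j : ℕ) := by
  have hgbd := fun i hi => g.2.2.1 i hi
  have hfix : F.1 (j : ℕ) = (j : ℕ) := by rw [hF]; exact glue_eq _ _
  apply le_antisymm
  · exact Nat.find_le ⟨hfix, j.2⟩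
  · by_contra hcon
    push_neg at hcon
    have htf := theJ_fix n F
    rw [hF, glue_lt _ _ hcon] at htf
    have := (hgbd _ hcon).1
    omega

lemma monSDInv_injective (n : ℕ) : Function.Injective (monSDInvFun n) := by
  intro x y hxy
  obtain ⟨j, g, h⟩ := x
  obtain ⟨j', g', h'⟩ := y
  have hfun : glue n j g.1 h.1 = glue n j' g'.1 h'.1 := congrArg Subtype.val hxy
  have hj : (j : ℕ) = (j' : ℕ) := by
    have e1 := theJ_glue n j g h (monSDInvFun n ⟨j, g, h⟩) rfl
    have e2 := theJ_glue n j' g' h' (monSDInvFun n ⟨j', g', h'⟩) rfl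
    rw [hxy] at e1
    rw [e1] at e2
    exact e2
  have hjj : j = j' := Fin.ext hj
  subst hjj
  have hg : g = g' := by
    apply Subtype.ext; funext i
    rcases lt_or_ge i (j : ℕ) with hi | hi
    · have := congrFun hfun i
      rw [glue_lt _ _ hi, glue_lt _ _ hi] at this
      omega
    · rw [g.2.2.2 i hi, g'.2.2.2 i hi]
  have hh : h = h' := by
    apply Subtype.ext; funext t
    rcases lt_or_ge t (n - (j : ℕ)) with ht | ht
    · have := congrFun hfun ((j : ℕ) + 1 + t)
      have hjn : (j : ℕ) < n + 1 := j.2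
      rw [glue_gt _ _ (by omega) (by omega), glue_gt _ _ (by omega) (by omega),
        (by omega : (j:ℕ) + 1 + t - ((j:ℕ) + 1) = t)] at this
      omega
    · rw [h.2.2.2 t ht, h'.2.2.2 t ht]
  rw [hg, hh]

def monSDEquiv (n : ℕ) : MonSD (n + 1) ≃ (j : Fin (n + 1)) × (MonSD j × MonSD (n - j)) where
  toFun := monSDToFun n
  invFun := monSDInvFun n
  left_inv := monSD_left_inv n
  right_inv x := monSDInv_injective n (monSD_left_inv n (monSDInvFun n x))

lemma card_monSD (n : ℕ) : Nat.card (MonSD n) = catalan n := by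
  induction n using Nat.strong_induction_on with
  | _ n ih =>
    cases n with
    | zero => simp [catalan_zero, Nat.card_unique]
    | succ n =>
      rw [Nat.card_congr (monSDEquiv n)]
      classical
      have : ∀ k : ℕ, Fintype (MonSD k) := fun k => Fintype.ofFinite _
      rw [Nat.card_eq_fintype_card, Fintype.card_sigma, catalan_succ]
      congr 1
      funext j
      rw [Fintype.card_prod, ← Nat.card_eq_fintype_card, ← Nat.card_eq_fintype_card,
        ih j (by omega), ih (n - j) (by omega)]

/-- A function on `Fin n` is 123-avoiding if there are no indices `a < b < c`
with `σ a < σ b < σ c`. -/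
def Avoids123 (n : ℕ) (σ : Fin n → Fin n) : Prop :=
  ∀ a b c : Fin n, a < b → b < c → σ a < σ b → σ b < σ c → False

/-- Antitone strictly-subdiagonal sequences. -/
def AntiSD (k : ℕ) : Type :=
  {f : ℕ → ℕ // (∀ i j, i ≤ j → j < k → f j ≤ f i) ∧ (∀ i, i < k → f i + i < k)
    ∧ ∀ i, k ≤ i → f i = 0}

def antiSDEquiv (k : ℕ) : AntiSD k ≃ MonSD k where
  toFun f := ⟨fun i => if i < k then k - 1 - f.1 i else 0, by
      intro a b hab hb
      simp only [if_pos hb, if_pos (lt_of_le_of_lt hab hb)]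
      have := f.2.1 a b hab hb
      omega, by
      intro i hi
      simp only [if_pos hi]
      have := f.2.2.1 i hi
      omega, by
      intro i hi; simp only [if_neg (by omega : ¬ i < k)]⟩
  invFun g := ⟨fun i => if i < k then k - 1 - g.1 i else 0, by
      intro a b hab hb
      simp only [if_pos hb, if_pos (lt_of_le_of_lt hab hb)]
      exact Nat.sub_le_sub_left (g.2.1 a b hab hb) _, by
      intro i hi
      simp only [if_pos hi]
      have := g.2.2.1 i hi
      omega, by
      intro i hi; simp only [if_neg (by omega : ¬ i < k)]⟩
  left_inv f := by
    apply Subtype.ext; funext i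
    rcases lt_or_ge i k with hi | hi
    · simp only [if_pos hi]
      have := f.2.2.1 i hi
      omega
    · simp only [if_neg (by omega : ¬ i < k)]
      exact (f.2.2.2 i hi).symm
  right_inv g := by
    apply Subtype.ext; funext i
    rcases lt_or_ge i k with hi | hi
    · simp only [if_pos hi]
      have := g.2.2.1 i hi
      omega
    · simp only [if_neg (by omega : ¬ i < k)]
      exact (g.2.2.2 i hi).symm

/-- A permutation of `Fin n` as a function `ℕ → ℕ`. -/
def permFun (n : ℕ) (σ : Equiv.Perm (Fin n)) : ℕ → ℕ :=
  fun k => if h : k < n then (σ ⟨k, h⟩ : ℕ) else 0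

lemma permFun_lt (n : ℕ) (σ : Equiv.Perm (Fin n)) {k : ℕ} (hk : k < n) :
    permFun n σ k = (σ ⟨k, hk⟩ : ℕ) := dif_pos hk

lemma permFun_injOn (n : ℕ) (σ : Equiv.Perm (Fin n)) {a b : ℕ} (ha : a < n) (hb : b < n)
    (h : permFun n σ a = permFun n σ b) : a = b := by
  rw [permFun_lt n σ ha, permFun_lt n σ hb] at h
  have := σ.injective (Fin.ext h)
  exact congrArg Fin.val this

/-- Running prefix minimum. -/
def pminF (g : ℕ → ℕ) : ℕ → ℕ
  | 0 => g 0
  | i+1 => min (pminF g i) (g (i+1))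

lemma pminF_zero (g : ℕ → ℕ) : pminF g 0 = g 0 := rfl

lemma pminF_succ (g : ℕ → ℕ) (i : ℕ) : pminF g (i+1) = min (pminF g i) (g (i+1)) := rfl

lemma pminF_le (g : ℕ → ℕ) : ∀ i k, k ≤ i → pminF g i ≤ g k := by
  intro i
  induction i with
  | zero =>
    intro k hk
    have : k = 0 := by omega
    subst this
    exact le_refl _
  | succ i ih =>
    intro k hk
    rcases Nat.lt_or_ge k (i+1) with h | h
    · exact le_trans (min_le_left _ _) (ih k (by omega))
    · have : k = i + 1 := by omega
      subst this
      exact min_le_right _ _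

lemma pminF_anti (g : ℕ → ℕ) : ∀ i j, i ≤ j → pminF g j ≤ pminF g i := by
  intro i j hij
  induction j with
  | zero => have : i = 0 := by omega
            subst this; exact le_refl _
  | succ j ih =>
    rcases Nat.lt_or_ge i (j+1) with h | h
    · exact le_trans (min_le_left _ _) (ih (by omega))
    · have : i = j + 1 := by omega
      subst this; exact le_refl _

lemma pminF_attained (g : ℕ → ℕ) : ∀ i, ∃ k, k ≤ i ∧ g k = pminF g i := by
  intro i
  induction i with
  | zero => exact ⟨0, le_refl _, rfl⟩
  | succ i ih =>
    obtain ⟨k, hk, hgk⟩ := ih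
    rcases le_or_gt (pminF g i) (g (i+1)) with h | h
    · exact ⟨k, by omega, by rw [hgk]; exact (min_eq_left h).symm⟩
    · exact ⟨i+1, le_refl _, (min_eq_right (le_of_lt h)).symm⟩

lemma pminF_congr (g g' : ℕ → ℕ) : ∀ i, (∀ k, k ≤ i → g k = g' k) → pminF g i = pminF g' i := by
  intro i
  induction i with
  | zero => intro h; exact h 0 (le_refl _)
  | succ i ih =>
    intro h
    show min (pminF g i) (g (i+1)) = min (pminF g' i) (g' (i+1))
    rw [ih (fun k hk => h k (by omega)), h (i+1) (le_refl _)]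

/-- pigeonhole bound for the prefix minimum of a permutation -/
lemma pminF_bound (n : ℕ) (σ : Equiv.Perm (Fin n)) {i : ℕ} (hi : i < n) :
    pminF (permFun n σ) i + i < n := by
  classical
  have hsub : (Finset.range (i+1)).image (permFun n σ)
      ⊆ Finset.Ico (pminF (permFun n σ) i) n := by
    intro v hv
    obtain ⟨k, hk, rfl⟩ := Finset.mem_image.mp hv
    rw [Finset.mem_range] at hk
    rw [Finset.mem_Ico]
    refine ⟨pminF_le _ i k (by omega), ?_⟩
    rw [permFun_lt n σ (by omega : k < n)]
    exact (σ ⟨k, by omega⟩).2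
  have hcard : ((Finset.range (i+1)).image (permFun n σ)).card = i + 1 := by
    rw [Finset.card_image_of_injOn, Finset.card_range]
    intro a ha b hb hab
    rw [Finset.mem_coe, Finset.mem_range] at ha hb
    exact permFun_injOn n σ (by omega) (by omega) hab
  have := Finset.card_le_card hsub
  rw [hcard, Nat.card_Ico] at this
  omega

/-- Reconstruction of a 123-avoiding permutation from its prefix-minimum sequence,
as a list of values (most recent value first). -/
def buildL (n : ℕ) (m : ℕ → ℕ) : ℕ → List ℕ
  | 0 => [m 0]
  | (i+1) =>
    (if m (i+1) < m i then m (i+1)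
      else Nat.findGreatest (fun v => v ∉ buildL n m i) (n-1)) :: buildL n m i

def build (n : ℕ) (m : ℕ → ℕ) (i : ℕ) : ℕ := (buildL n m i).headD 0

lemma build_zero (n : ℕ) (m : ℕ → ℕ) : build n m 0 = m 0 := rfl

lemma buildL_succ (n : ℕ) (m : ℕ → ℕ) (i : ℕ) :
    buildL n m (i+1) = build n m (i+1) :: buildL n m i := by
  have h : ∃ x, buildL n m (i+1) = x :: buildL n m i := ⟨_, by rw [buildL]⟩
  obtain ⟨x, hx⟩ := h
  rw [hx]
  rw [show build n m (i+1) = (buildL n m (i+1)).headD 0 from rfl, hx]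
  simp

lemma buildL_length (n : ℕ) (m : ℕ → ℕ) : ∀ i, (buildL n m i).length = i + 1 := by
  intro i
  induction i with
  | zero => rfl
  | succ i ih => rw [buildL_succ, List.length_cons, ih]

lemma build_succ_lt (n : ℕ) (m : ℕ → ℕ) (i : ℕ) (h : m (i+1) < m i) :
    build n m (i+1) = m (i+1) := by
  show (buildL n m (i+1)).headD 0 = m (i+1)
  rw [buildL]
  simp only [List.headD_cons, if_pos h]

lemma build_succ_ge (n : ℕ) (m : ℕ → ℕ) (i : ℕ) (h : ¬ m (i+1) < m i) :
    build n m (i+1) = Nat.findGreatest (fun v => v ∉ buildL n m i) (n-1) := by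
  show (buildL n m (i+1)).headD 0 = _
  rw [buildL]
  simp only [List.headD_cons, if_neg h]

lemma mem_buildL (n : ℕ) (m : ℕ → ℕ) :
    ∀ i v, v ∈ buildL n m i ↔ ∃ j, j ≤ i ∧ build n m j = v := by
  intro i
  induction i with
  | zero =>
    intro v
    constructor
    · intro hv
      rw [show buildL n m 0 = [m 0] from rfl, List.mem_singleton] at hv
      exact ⟨0, le_refl _, hv.symm⟩
    · rintro ⟨j, hj, rfl⟩
      have : j = 0 := by omega
      subst this
      rw [show buildL n m 0 = [m 0] from rfl]
      exact List.mem_singleton.mpr rfl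
  | succ i ih =>
    intro v
    rw [buildL_succ, List.mem_cons]
    constructor
    · rintro (rfl | hv)
      · exact ⟨i+1, le_refl _, rfl⟩
      · obtain ⟨j, hj, hbj⟩ := (ih v).mp hv
        exact ⟨j, by omega, hbj⟩
    · rintro ⟨j, hj, rfl⟩
      rcases Nat.lt_or_ge j (i+1) with h | h
      · exact Or.inr ((ih _).mpr ⟨j, by omega, rfl⟩)
      · have : j = i + 1 := by omega
        subst this
        exact Or.inl rfl

section BuildLemmas

variable {n : ℕ} {m : ℕ → ℕ}
  (hm1 : ∀ i j, i ≤ j → j < n → m j ≤ m i) (hm2 : ∀ i, i < n → m i + i < n)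

include hm1 hm2 in
lemma build_main : ∀ i, i < n →
    (m i ≤ build n m i ∧ build n m i < n) ∧
    (∀ j, j < i → build n m j ≠ build n m i) ∧
    (∃ k, k ≤ i ∧ build n m k = m i) := by
  intro i
  induction i using Nat.strong_induction_on with
  | _ i ih =>
  intro hi
  match i with
  | 0 =>
    rw [build_zero]
    refine ⟨⟨le_refl _, ?_⟩, fun j hj => by omega, ⟨0, le_refl _, build_zero n m⟩⟩
    have := hm2 0 hi
    omega
  | (i+1) =>
    rcases lt_or_ge (m (i+1)) (m i) with hlt | hge
    · rw [build_succ_lt n m i hlt]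
      refine ⟨⟨le_refl _, by have := hm2 (i+1) hi; omega⟩, ?_, ⟨i+1, le_refl _, ?_⟩⟩
      · intro j hj
        have hA := (ih j (by omega) (by omega)).1.1
        have : m i ≤ m j := hm1 j i (by omega) (by omega)
        omega
      · rw [build_succ_lt n m i hlt]
    · have heq : m (i+1) = m i := le_antisymm (hm1 i (i+1) (by omega) hi) hge
      classical
      have hB := build_succ_ge n m i (by omega)
      -- find a fresh value above m (i+1)
      have hmm : m (i+1) ∈ (buildL n m i).toFinset := by
        obtain ⟨k, hk, hbk⟩ := (ih i (by omega) (by omega)).2.2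
        rw [List.mem_toFinset, mem_buildL]
        exact ⟨k, hk, by omega⟩
      have hinter : (Finset.Ico (m (i+1) + 1) n ∩ (buildL n m i).toFinset).card ≤ i := by
        have hsub : Finset.Ico (m (i+1) + 1) n ∩ (buildL n m i).toFinset
            ⊆ (buildL n m i).toFinset.erase (m (i+1)) := by
          intro v hv
          rw [Finset.mem_inter, Finset.mem_Ico] at hv
          exact Finset.mem_erase.mpr ⟨by omega, hv.2⟩
        have h1 := Finset.card_le_card hsub
        have h2 : ((buildL n m i).toFinset.erase (m (i+1))).card
            = (buildL n m i).toFinset.card - 1 := Finset.card_erase_of_mem hmm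
        have h3 : (buildL n m i).toFinset.card ≤ i + 1 := by
          have := (buildL n m i).toFinset_card_le
          rw [buildL_length] at this
          exact this
        omega
      have hne : (Finset.Ico (m (i+1) + 1) n \ (buildL n m i).toFinset).Nonempty := by
        rw [← Finset.card_pos]
        have := Finset.card_inter_add_card_sdiff (Finset.Ico (m (i+1) + 1) n)
          (buildL n m i).toFinset
        rw [Nat.card_Ico] at this
        have hb := hm2 (i+1) hi
        omega
      obtain ⟨v0, hv0⟩ := hne
      rw [Finset.mem_sdiff, Finset.mem_Ico] at hv0
      have hPv0 : v0 ∉ buildL n m i := fun hmem => hv0.2 (List.mem_toFinset.mpr hmem)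
      have hv0le : v0 ≤ n - 1 := by omega
      have hge0 : v0 ≤ Nat.findGreatest (fun v => v ∉ buildL n m i) (n-1) :=
        Nat.le_findGreatest (P := fun v => v ∉ buildL n m i) hv0le hPv0
      have hspec : Nat.findGreatest (fun v => v ∉ buildL n m i) (n-1) ∉ buildL n m i :=
        Nat.findGreatest_spec (P := fun v => v ∉ buildL n m i) hv0le hPv0
      have hle : Nat.findGreatest (fun v => v ∉ buildL n m i) (n-1) ≤ n - 1 :=
        Nat.findGreatest_le _
      rw [hB]
      refine ⟨⟨by omega, by omega⟩, ?_, ?_⟩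
      · intro j hj hcontra
        apply hspec
        rw [mem_buildL]
        exact ⟨j, by omega, hcontra⟩
      · obtain ⟨k, hk, hbk⟩ := (ih i (by omega) (by omega)).2.2
        exact ⟨k, by omega, by rw [hbk, heq]⟩

include hm1 hm2 in
lemma build_avoids : ∀ a b c, a < b → b < c → c < n →
    build n m a < build n m b → build n m b < build n m c → False := by
  intro a b c hab hbc hc hv1 hv2
  match b, hab with
  | (b+1), hab =>
    have hA := fun (x : ℕ) (hx : x < n) => (build_main hm1 hm2 x hx).1
    rcases lt_or_ge (m (b+1)) (m b) with hlt | hge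
    · -- b is a new minimum: impossible since build a ≥ m a ≥ m b > m (b+1) = build b
      have h1 : build n m (b+1) = m (b+1) := build_succ_lt n m b hlt
      have h2 : m a ≤ build n m a := (hA a (by omega)).1
      have h3 : m b ≤ m a := hm1 a b (by omega) (by omega)
      omega
    · classical
      have h1 := build_succ_ge n m b (by omega)
      have hPc : build n m c ∉ buildL n m b := by
        intro hmem
        obtain ⟨j, hj, hbj⟩ := (mem_buildL n m b _).mp hmem
        exact (build_main hm1 hm2 c hc).2.1 j (by omega) hbj
      have hcle : build n m c ≤ n - 1 := by
        have := (hA c hc).2; omega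
      have := Nat.le_findGreatest (P := fun v => v ∉ buildL n m b) hcle hPc
      rw [← h1] at this
      omega

end BuildLemmas

/-- The permutation built from an antitone subdiagonal sequence. -/
noncomputable def buildPerm (n : ℕ) (m : AntiSD n) : Equiv.Perm (Fin n) :=
  Equiv.ofBijective
    (fun i : Fin n => (⟨build n m.1 i, (build_main m.2.1 m.2.2.1 i i.2).1.2⟩ : Fin n))
    (by
      rw [← Finite.injective_iff_bijective]
      intro a b hab
      have h := congrArg Fin.val hab
      simp only at h
      rcases lt_trichotomy (a : ℕ) (b : ℕ) with h1 | h1 | h1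
      · exact absurd h ((build_main m.2.1 m.2.2.1 b b.2).2.1 a h1)
      · exact Fin.ext h1
      · exact absurd h.symm ((build_main m.2.1 m.2.2.1 a a.2).2.1 b h1))

lemma buildPerm_apply (n : ℕ) (m : AntiSD n) (i : Fin n) :
    (buildPerm n m i : ℕ) = build n m.1 i := rfl

lemma buildPerm_avoids (n : ℕ) (m : AntiSD n) : Avoids123 n (buildPerm n m) := by
  intro a b c hab hbc h1 h2
  rw [Fin.lt_def] at h1 h2
  rw [buildPerm_apply, buildPerm_apply] at h1 h2
  exact build_avoids m.2.1 m.2.2.1 a b c hab hbc c.2 h1 h2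

/-- forward map: avoiding permutation to its prefix-min sequence -/
def toAntiSD (n : ℕ) (σ : Equiv.Perm (Fin n)) : AntiSD n :=
  ⟨fun i => if i < n then pminF (permFun n σ) i else 0, by
    intro a b hab hb
    simp only [if_pos hb, if_pos (lt_of_le_of_lt hab hb)]
    exact pminF_anti _ a b hab, by
    intro i hi
    simp only [if_pos hi]
    exact pminF_bound n σ hi, by
    intro i hi; simp only [if_neg (by omega : ¬ i < n)]⟩

/-- the prefix minima of the built permutation recover the sequence -/
lemma pminF_build (n : ℕ) (m : AntiSD n) : ∀ i, i < n → pminF (build n m.1) i = m.1 i := by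
  intro i
  induction i with
  | zero => intro hi; rw [pminF_zero, build_zero]
  | succ i ih =>
    intro hi
    rw [pminF_succ, ih (by omega)]
    rcases lt_or_ge (m.1 (i+1)) (m.1 i) with hlt | hge
    · rw [build_succ_lt n m.1 i hlt]
      omega
    · have heq : m.1 (i+1) = m.1 i := le_antisymm (m.2.1 i (i+1) (by omega) hi) hge
      have hA := (build_main m.2.1 m.2.2.1 (i+1) hi).1.1
      omega

lemma toAntiSD_buildPerm (n : ℕ) (m : AntiSD n) : toAntiSD n (buildPerm n m) = m := by
  apply Subtype.ext
  funext i
  show (if i < n then pminF (permFun n (buildPerm n m)) i else 0) = m.1 i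
  rcases lt_or_ge i n with hi | hi
  · rw [if_pos hi]
    rw [pminF_congr (permFun n (buildPerm n m)) (build n m.1) i
      (fun k hk => by rw [permFun_lt n _ (by omega : k < n)]; exact buildPerm_apply n m _)]
    exact pminF_build n m i hi
  · rw [if_neg (by omega)]
    exact (m.2.2.2 i hi).symm

/-- key: an avoiding permutation satisfies the greedy reconstruction -/
lemma build_toAntiSD (n : ℕ) (σ : Equiv.Perm (Fin n)) (hσ : Avoids123 n σ) :
    ∀ k, k < n → build n (toAntiSD n σ).1 k = permFun n σ k := by
  intro k
  induction k using Nat.strong_induction_on with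
  | _ k ih =>
  intro hk
  set mf := (toAntiSD n σ).1 with hmf
  have hmf_eq : ∀ j, j < n → mf j = pminF (permFun n σ) j := by
    intro j hj
    show (if j < n then pminF (permFun n σ) j else 0) = _
    rw [if_pos hj]
  match k with
  | 0 =>
    rw [build_zero, hmf_eq 0 hk, pminF_zero]
  | (k+1) =>
    have hIH : ∀ j, j ≤ k → build n mf j = permFun n σ j := fun j hj => ih j (by omega) (by omega)
    have e1 : mf (k+1) = min (pminF (permFun n σ) k) (permFun n σ (k+1)) := by
      rw [hmf_eq (k+1) hk, pminF_succ]
    have e0 : mf k = pminF (permFun n σ) k := hmf_eq k (by omega)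
    rcases lt_or_ge (mf (k+1)) (mf k) with hlt | hge
    · rw [build_succ_lt n mf k hlt, e1]
      omega
    · have hB := build_succ_ge n mf k (by omega)
      classical
      -- the new value is not among the previously built (= previous σ) values
      have hfresh : permFun n σ (k+1) ∉ buildL n mf k := by
        intro hmem
        obtain ⟨j, hj, hbj⟩ := (mem_buildL n mf k _).mp hmem
        rw [hIH j hj] at hbj
        have := permFun_injOn n σ (by omega) (by omega) hbj
        omega
      have hvle : permFun n σ (k+1) ≤ n - 1 := by
        rw [permFun_lt n σ (by omega : k + 1 < n)]
        have := (σ ⟨k+1, by omega⟩).2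
        omega
      have hge1 : permFun n σ (k+1) ≤ Nat.findGreatest (fun v => v ∉ buildL n mf k) (n-1) :=
        Nat.le_findGreatest (P := fun v => v ∉ buildL n mf k) hvle hfresh
      have hspec : Nat.findGreatest (fun v => v ∉ buildL n mf k) (n-1) ∉ buildL n mf k :=
        Nat.findGreatest_spec (P := fun v => v ∉ buildL n mf k) hvle hfresh
      have hle : Nat.findGreatest (fun v => v ∉ buildL n mf k) (n-1) ≤ n - 1 :=
        Nat.findGreatest_le _
      rw [hB]
      -- it suffices to exclude that the greatest fresh value exceeds σ (k+1)
      rcases lt_or_ge (permFun n σ (k+1)) (Nat.findGreatest (fun v => v ∉ buildL n mf k) (n-1))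
        with hgt | hle2
      · exfalso
        set F := Nat.findGreatest (fun v => v ∉ buildL n mf k) (n-1) with hF
        -- F is a fresh value; it occurs at some position t > k+1
        have hFn : F < n := by omega
        set t := σ.symm ⟨F, hFn⟩ with ht
        have hσt : permFun n σ (t : ℕ) = F := by
          rw [permFun_lt n σ t.2]
          have : σ ⟨(t : ℕ), t.2⟩ = ⟨F, hFn⟩ := by
            rw [show (⟨(t : ℕ), t.2⟩ : Fin n) = t from Fin.ext rfl]
            exact σ.apply_symm_apply _
          rw [this]
      -- t is not among 0..k+1
        have htgt : k + 1 < (t : ℕ) := by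
          rcases lt_trichotomy (t : ℕ) (k+1) with h1 | h1 | h1
          · exfalso
            apply hspec
            rw [mem_buildL]
            refine ⟨(t : ℕ), by omega, ?_⟩
            rw [hIH (t : ℕ) (by omega), hσt]
          · exfalso
            rw [← h1] at hgt
            omega
          · exact h1
        -- the prefix minimum is attained at some a ≤ k
        obtain ⟨a, ha, hpa⟩ := pminF_attained (permFun n σ) k
        have hlt1 : permFun n σ a < permFun n σ (k+1) := by
          have hge2 : pminF (permFun n σ) k ≤ permFun n σ (k+1) := by omega
          rcases lt_or_eq_of_le (hpa ▸ hge2) with h | h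
          · exact h
          · exfalso
            have := permFun_injOn n σ (by omega) (by omega) h
            omega
        -- 123 pattern at a < k+1 < t
        apply hσ ⟨a, by omega⟩ ⟨k+1, by omega⟩ t
        · exact Fin.mk_lt_mk.mpr (by omega)
        · rw [Fin.lt_def]
          exact htgt
        · rw [Fin.lt_def]
          rw [permFun_lt n σ (by omega : a < n), permFun_lt n σ (by omega : k+1 < n)] at hlt1
          exact hlt1
        · rw [Fin.lt_def]
          have : permFun n σ (k+1) < permFun n σ (t : ℕ) := by omega
          rw [permFun_lt n σ (by omega : k+1 < n), permFun_lt n σ t.2] at this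
          have h2 : (⟨(t : ℕ), t.2⟩ : Fin n) = t := Fin.ext rfl
          rw [h2] at this
          exact this
      · omega

lemma buildPerm_toAntiSD (n : ℕ) (σ : Equiv.Perm (Fin n)) (hσ : Avoids123 n σ) :
    buildPerm n (toAntiSD n σ) = σ := by
  apply Equiv.ext
  intro x
  apply Fin.ext
  rw [buildPerm_apply, build_toAntiSD n σ hσ x x.2, permFun_lt n σ x.2]

noncomputable def avoidersEquivAntiSD (n : ℕ) :
    {σ : Equiv.Perm (Fin n) // Avoids123 n σ} ≃ AntiSD n where
  toFun σ := toAntiSD n σ.1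
  invFun m := ⟨buildPerm n m, buildPerm_avoids n m⟩
  left_inv σ := Subtype.ext (buildPerm_toAntiSD n σ.1 σ.2)
  right_inv m := toAntiSD_buildPerm n m

/-- The number of 123-avoiding permutations of `{1, …, n}` equals the `n`-th
Catalan number. -/
theorem card_avoids123_eq_catalan (n : ℕ) (hn : 1 ≤ n) :
    Nat.card {σ : Equiv.Perm (Fin n) // Avoids123 n σ} = catalan n := by
  rw [Nat.card_congr (avoidersEquivAntiSD n), Nat.card_congr (antiSDEquiv n), card_monSD]
end
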